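/- arXiv:0906.0451 — 6 statements merged into one kernel-verified Lean document; each statement's English description precedes it below -/
import Mathlib

section
/- Let ω₁, ω₂ > 0 and let T² be the topological 2-torus (ℝ/ω₁ℤ) × (ℝ/ω₂ℤ). Let ∼ be the equivalence relation on T² identifying each point (θ₁,θ₂) with its image (−θ₁, ω₂/2−θ₂) under the involution σ₁. Then the quotient space T²/∼, with the quotient topology, is homeomorphic to the unit 2-sphere S² = {x ∈ ℝ³ : |x| = 1}. -/
/-!
Identify each factor `ℝ/ωℤ` with the unit circle via `θ ↦ exp (2πiθ/ω)`. The involution becomes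
`(z, w) ↦ (z̄, -w̄)`, and `(Re z, Im w, Im z · Re w)` is a complete invariant of its orbits.
These fill out the "pillowcase" `e² = (1 - a²)(1 - c²)`, `a², c² ≤ 1`, which every ray from the
origin meets exactly once: along `r • v` the equation reads `k s² - s + 1 = 0` in `s = r²`, with
`k = v₀² v₁²`. Radial projection therefore induces a continuous bijection from the compact quotient
onto the sphere.
-/

/-- The involution `σ₁(θ₁,θ₂) = (−θ₁, ω₂/2−θ₂)` of the torus `(ℝ/ω₁ℤ) × (ℝ/ω₂ℤ)`. -/
noncomputable def torusInvol (ω₁ ω₂ : ℝ) (p : AddCircle ω₁ × AddCircle ω₂) :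
    AddCircle ω₁ × AddCircle ω₂ :=
  (-p.1, ((ω₂ / 2 : ℝ) : AddCircle ω₂) - p.2)

/-- The relation identifying each point of the torus with its image under `σ₁`. -/
def torusRel (ω₁ ω₂ : ℝ) (p q : AddCircle ω₁ × AddCircle ω₂) : Prop :=
  q = p ∨ q = torusInvol ω₁ ω₂ p

open Metric Function

theorem nonempty_quot_homeomorph_of_continuous_surjective {X Y : Type*} [TopologicalSpace X]
    [CompactSpace X] [TopologicalSpace Y] [T2Space Y] {r : X → X → Prop} {f : X → Y}
    (hf : Continuous f) (hsurj : Surjective f) (hr : ∀ x y, f x = f y ↔ r x y) :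
    Nonempty (Quot r ≃ₜ Y) := by
  let g : Quot r → Y := Quot.lift f fun x y hxy => (hr x y).2 hxy
  have hinj : Injective g := by
    rintro ⟨x⟩ ⟨y⟩ hxy
    exact Quot.sound ((hr x y).1 hxy)
  exact ⟨(continuous_quot_lift _ hf).homeoOfEquivCompactToT2
    (f := Equiv.ofBijective g ⟨hinj, fun y => (hsurj y).elim fun x hx => ⟨Quot.mk r x, hx⟩⟩)⟩

section Normalize

variable {E : Type*} [NormedAddCommGroup E] [NormedSpace ℝ E] {K : Set E}

theorem injOn_inv_norm_smul (hK : ∀ u ∈ K, ∀ r : ℝ, 0 < r → r • u ∈ K → r = 1) :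
    Set.InjOn (fun u => ‖u‖⁻¹ • u) K := by
  have hK0 (u) (hu : u ∈ K) : u ≠ 0 := by
    rintro rfl
    simpa using hK 0 hu 2 two_pos (by simpa using hu)
  intro u hu v hv huv
  have hu0 := norm_pos_iff.2 (hK0 u hu)
  have hv0 := norm_pos_iff.2 (hK0 v hv)
  have hvu : v = (‖v‖ / ‖u‖) • u := by
    simp only at huv
    rw [div_eq_mul_inv, mul_smul, huv, smul_inv_smul₀ hv0.ne']
  have hratio := hK u hu _ (div_pos hv0 hu0) (hvu ▸ hv)
  rw [hvu, hratio, one_smul]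

theorem surjOn_inv_norm_smul (hK : ∀ v : E, ‖v‖ = 1 → ∃ r : ℝ, 0 < r ∧ r • v ∈ K) :
    Set.SurjOn (fun u => ‖u‖⁻¹ • u) K (sphere 0 1) := by
  intro v hv
  rw [mem_sphere_zero_iff_norm] at hv
  obtain ⟨r, hr, hrv⟩ := hK v hv
  refine ⟨r • v, hrv, ?_⟩
  simp [norm_smul, hv, abs_of_pos hr, smul_smul, hr.ne']

end Normalize

def pillowcase : Set (EuclideanSpace ℝ (Fin 3)) :=
  {u | u 0 ^ 2 ≤ 1 ∧ u 1 ^ 2 ≤ 1 ∧ u 2 ^ 2 = (1 - u 0 ^ 2) * (1 - u 1 ^ 2)}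

theorem eq_one_of_smul_mem_pillowcase {u : EuclideanSpace ℝ (Fin 3)} (hu : u ∈ pillowcase)
    {r : ℝ} (hr : 0 < r) (hru : r • u ∈ pillowcase) : r = 1 := by
  obtain ⟨ha, hc, he⟩ := hu
  obtain ⟨ha', hc', he'⟩ := hru
  simp only [PiLp.smul_apply, smul_eq_mul, mul_pow] at ha' hc' he'
  set s := r ^ 2
  have key : (s - 1) * (1 - s * u 0 ^ 2 * u 1 ^ 2) = 0 := by
    linear_combination he' - s * he
  have hs : s = 1 := by
    rcases mul_eq_zero.1 key with h | h
    · linarith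
    · have hc1 : u 1 ^ 2 = 1 := by
        nlinarith [mul_nonneg (sub_nonneg.2 ha') (sq_nonneg (u 1))]
      have ha1 : u 0 ^ 2 = 1 := by
        nlinarith [mul_nonneg (sub_nonneg.2 hc') (sq_nonneg (u 0))]
      rw [ha1, hc1] at h
      linarith
  exact (pow_eq_one_iff_of_nonneg hr.le two_ne_zero).1 hs

theorem two_mul_sq_le_one_add_sqrt {x y z : ℝ} (h : x ^ 2 + y ^ 2 + z ^ 2 = 1) :
    2 * x ^ 2 ≤ 1 + √(1 - 4 * (x ^ 2 * y ^ 2)) := by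
  have := Real.abs_le_sqrt (x := 2 * x ^ 2 - 1) (y := 1 - 4 * (x ^ 2 * y ^ 2))
    (by nlinarith [mul_nonneg (sq_nonneg x) (sq_nonneg z)])
  linarith [le_abs_self (2 * x ^ 2 - 1)]

theorem exists_smul_mem_pillowcase {v : EuclideanSpace ℝ (Fin 3)} (hv : ‖v‖ = 1) :
    ∃ r : ℝ, 0 < r ∧ r • v ∈ pillowcase := by
  have hv2 : v 0 ^ 2 + v 1 ^ 2 + v 2 ^ 2 = 1 := by
    simpa [Fin.sum_univ_three, hv] using (EuclideanSpace.norm_sq_eq v).symm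
  set D := √(1 - 4 * (v 0 ^ 2 * v 1 ^ 2))
  have hD2 : D ^ 2 = 1 - 4 * (v 0 ^ 2 * v 1 ^ 2) := Real.sq_sqrt <| by
    nlinarith [sq_nonneg (v 0 ^ 2 - v 1 ^ 2), sq_nonneg (v 2), sq_nonneg (v 0), sq_nonneg (v 1)]
  have hD : 0 ≤ D := Real.sqrt_nonneg _
  -- the smaller root of `k s² - s + 1 = 0`, `k = v₀² v₁²`, in a form that also covers `k = 0`
  set s := 2 / (1 + D)
  have hs : 0 < s := by positivity
  have hroot : v 0 ^ 2 * v 1 ^ 2 * s ^ 2 - s + 1 = 0 := by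
    simp only [s]
    field_simp
    linear_combination hD2
  have hx : s * v 0 ^ 2 ≤ 1 := by
    rw [div_mul_eq_mul_div, div_le_one (by positivity)]
    exact two_mul_sq_le_one_add_sqrt hv2
  have hy : s * v 1 ^ 2 ≤ 1 := by
    rw [div_mul_eq_mul_div, div_le_one (by positivity)]
    have := two_mul_sq_le_one_add_sqrt (x := v 1) (y := v 0) (z := v 2)
      (by linear_combination hv2)
    rwa [mul_comm (v 1 ^ 2)] at this
  refine ⟨√s, Real.sqrt_pos.2 hs, ?_⟩
  simp only [pillowcase, Set.mem_ofPred_eq, PiLp.smul_apply, smul_eq_mul, mul_pow,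
    Real.sq_sqrt hs.le]
  exact ⟨hx, hy, by linear_combination s * hv2 - hroot⟩

theorem eq_and_eq_or_eq_neg_and_eq_neg {b d b' d' : ℝ} (hb : b' ^ 2 = b ^ 2)
    (hd : d' ^ 2 = d ^ 2) (h : b' * d' = b * d) : b' = b ∧ d' = d ∨ b' = -b ∧ d' = -d := by
  rcases sq_eq_sq_iff_eq_or_eq_neg.1 hb with rfl | rfl <;>
    rcases sq_eq_sq_iff_eq_or_eq_neg.1 hd with rfl | rfl
  all_goals grind

theorem Circle.re_sq_add_im_sq (z : Circle) : (z : ℂ).re ^ 2 + (z : ℂ).im ^ 2 = 1 := by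
  simpa [Complex.normSq_apply, sq] using Circle.normSq_coe z

theorem Circle.exists_re_im {a b : ℝ} (h : a ^ 2 + b ^ 2 = 1) :
    ∃ z : Circle, (z : ℂ).re = a ∧ (z : ℂ).im = b := by
  have hz : ‖(⟨a, b⟩ : ℂ)‖ = 1 := by
    rw [← pow_eq_one_iff_of_nonneg (norm_nonneg _) two_ne_zero, Complex.sq_norm,
      Complex.normSq_apply]
    linear_combination h
  exact ⟨⟨⟨a, b⟩, mem_sphere_zero_iff_norm.2 hz⟩, rfl, rfl⟩

noncomputable def circleInvol (p : Circle × Circle) : Circle × Circle := (p.1⁻¹, -p.2⁻¹)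

noncomputable def pillowMap (p : Circle × Circle) : EuclideanSpace ℝ (Fin 3) :=
  !₂[(p.1 : ℂ).re, (p.2 : ℂ).im, (p.1 : ℂ).im * (p.2 : ℂ).re]

theorem continuous_pillowMap : Continuous pillowMap := by
  unfold pillowMap
  fun_prop

theorem pillowMap_eq_pillowMap_iff {p q : Circle × Circle} :
    pillowMap p = pillowMap q ↔ q = p ∨ q = circleInvol p := by
  constructor
  · intro h
    simp only [pillowMap, WithLp.toLp.injEq, Matrix.vecCons_inj, and_true] at h
    obtain ⟨hre, him, hprod⟩ := h
    have him_sq : (q.1 : ℂ).im ^ 2 = (p.1 : ℂ).im ^ 2 := by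
      linear_combination Circle.re_sq_add_im_sq q.1 - Circle.re_sq_add_im_sq p.1 +
        ((p.1 : ℂ).re + (q.1 : ℂ).re) * hre
    have hre_sq : (q.2 : ℂ).re ^ 2 = (p.2 : ℂ).re ^ 2 := by
      linear_combination Circle.re_sq_add_im_sq q.2 - Circle.re_sq_add_im_sq p.2 +
        ((p.2 : ℂ).im + (q.2 : ℂ).im) * him
    rcases eq_and_eq_or_eq_neg_and_eq_neg him_sq hre_sq hprod.symm with ⟨h1, h2⟩ | ⟨h1, h2⟩
    · exact .inl (Prod.ext (Circle.ext (Complex.ext hre.symm h1))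
        (Circle.ext (Complex.ext h2 him.symm)))
    · refine .inr (Prod.ext (Circle.ext (Complex.ext ?_ ?_)) (Circle.ext (Complex.ext ?_ ?_))) <;>
        simp [circleInvol, hre, him, h1, h2]
  · rintro (rfl | rfl)
    · rfl
    · simp [pillowMap, circleInvol]

theorem pillowMap_mem_pillowcase (p : Circle × Circle) : pillowMap p ∈ pillowcase := by
  have h1 := Circle.re_sq_add_im_sq p.1
  have h2 := Circle.re_sq_add_im_sq p.2
  refine ⟨?_, ?_, ?_⟩ <;> simp only [pillowMap, PiLp.toLp_apply, Matrix.cons_val] <;> nlinarith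

theorem pillowcase_subset_range_pillowMap : pillowcase ⊆ Set.range pillowMap := by
  rintro u ⟨ha, hc, he⟩
  obtain ⟨b, hb, hbe⟩ : ∃ b, b ^ 2 = 1 - u 0 ^ 2 ∧ b * √(1 - u 1 ^ 2) = u 2 := by
    have habs : |u 2| = √(1 - u 0 ^ 2) * √(1 - u 1 ^ 2) := by
      rw [← Real.sqrt_sq_eq_abs, he, Real.sqrt_mul (by linarith)]
    rcases le_or_gt 0 (u 2) with h | h
    · exact ⟨_, Real.sq_sqrt (by linarith), by rw [← habs, abs_of_nonneg h]⟩
    · exact ⟨-√(1 - u 0 ^ 2), by rw [neg_sq, Real.sq_sqrt (by linarith)],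
        by rw [neg_mul, ← habs, abs_of_neg h, neg_neg]⟩
  obtain ⟨z, hz_re, hz_im⟩ := Circle.exists_re_im (a := u 0) (b := b) (by linarith)
  obtain ⟨w, hw_re, hw_im⟩ := Circle.exists_re_im (a := √(1 - u 1 ^ 2)) (b := u 1)
    (by rw [Real.sq_sqrt (by linarith)]; ring)
  refine ⟨(z, w), ?_⟩
  ext i
  fin_cases i <;> simp [pillowMap, hz_re, hz_im, hw_re, hw_im, hbe]

theorem zero_notMem_pillowcase : (0 : EuclideanSpace ℝ (Fin 3)) ∉ pillowcase := by
  simp [pillowcase]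

theorem pillowMap_ne_zero (p : Circle × Circle) : pillowMap p ≠ 0 :=
  fun h => zero_notMem_pillowcase (h ▸ pillowMap_mem_pillowcase p)

noncomputable def sphereMap (p : Circle × Circle) : sphere (0 : EuclideanSpace ℝ (Fin 3)) 1 :=
  ⟨‖pillowMap p‖⁻¹ • pillowMap p,
    mem_sphere_zero_iff_norm.2 (norm_smul_inv_norm (pillowMap_ne_zero p))⟩

theorem continuous_sphereMap : Continuous sphereMap := by
  refine Continuous.subtype_mk ?_ _
  exact ((continuous_norm.comp continuous_pillowMap).inv₀ fun p =>
    norm_ne_zero_iff.2 (pillowMap_ne_zero p)).smul continuous_pillowMap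

theorem sphereMap_eq_sphereMap_iff {p q : Circle × Circle} :
    sphereMap p = sphereMap q ↔ pillowMap p = pillowMap q := by
  refine ⟨fun h => ?_, fun h => by simp only [sphereMap, h]⟩
  exact injOn_inv_norm_smul (fun u hu r hr hru => eq_one_of_smul_mem_pillowcase hu hr hru)
    (pillowMap_mem_pillowcase p) (pillowMap_mem_pillowcase q) (congrArg Subtype.val h)

theorem surjective_sphereMap : Surjective sphereMap := by
  rintro ⟨v, hv⟩
  obtain ⟨u, hu, huv⟩ := surjOn_inv_norm_smul (fun v hv => exists_smul_mem_pillowcase hv) hv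
  obtain ⟨p, rfl⟩ := pillowcase_subset_range_pillowMap hu
  exact ⟨p, Subtype.ext huv⟩

namespace AddCircle

variable {T : ℝ}

theorem toCircle_half (hT : T ≠ 0) : toCircle ((T / 2 : ℝ) : AddCircle T) = -1 := by
  ext
  rw [toCircle_apply_mk, Circle.coe_exp, Circle.coe_neg, Circle.coe_one,
    show 2 * Real.pi / T * (T / 2) = Real.pi by field_simp, Complex.exp_pi_mul_I]

theorem surjective_toCircle (hT : T ≠ 0) : Surjective (@toCircle T) := by
  simpa [funext (homeomorphCircle_apply hT)] using (homeomorphCircle hT).surjective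

end AddCircle

open AddCircle

theorem toCircle_torusInvol {ω₁ ω₂ : ℝ} (hω₂ : ω₂ ≠ 0) (p : AddCircle ω₁ × AddCircle ω₂) :
    Prod.map toCircle toCircle (torusInvol ω₁ ω₂ p) =
      circleInvol (Prod.map toCircle toCircle p) := by
  simp [torusInvol, circleInvol, sub_eq_add_neg, toCircle_add, toCircle_neg, toCircle_half hω₂]

theorem torusRel_iff {ω₁ ω₂ : ℝ} (hω₁ : ω₁ ≠ 0) (hω₂ : ω₂ ≠ 0)
    {p q : AddCircle ω₁ × AddCircle ω₂} :
    torusRel ω₁ ω₂ p q ↔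
      pillowMap (Prod.map toCircle toCircle p) = pillowMap (Prod.map toCircle toCircle q) := by
  have hinj := (injective_toCircle hω₁).prodMap (injective_toCircle hω₂)
  rw [pillowMap_eq_pillowMap_iff, ← toCircle_torusInvol hω₂, hinj.eq_iff, hinj.eq_iff, torusRel]

/-- the quotient of the torus `(ℝ/ω₁ℤ) × (ℝ/ω₂ℤ)` by the involution
`σ₁(θ₁,θ₂) = (−θ₁, ω₂/2−θ₂)`, with the quotient topology, is homeomorphic to the
unit 2-sphere in `ℝ³`. -/
theorem stmt_2 (ω₁ ω₂ : ℝ) (hω₁ : 0 < ω₁) (hω₂ : 0 < ω₂) :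
    Nonempty (Quot (torusRel ω₁ ω₂) ≃ₜ
      (Metric.sphere (0 : EuclideanSpace ℝ (Fin 3)) 1)) := by
  have := Fact.mk hω₁
  have := Fact.mk hω₂
  refine nonempty_quot_homeomorph_of_continuous_surjective
    (f := fun p => sphereMap (Prod.map toCircle toCircle p))
    (continuous_sphereMap.comp (continuous_toCircle.prodMap continuous_toCircle))
    (surjective_sphereMap.comp
      ((surjective_toCircle hω₁.ne').prodMap (surjective_toCircle hω₂.ne'))) fun p q => ?_
  rw [sphereMap_eq_sphereMap_iff, torusRel_iff hω₁.ne' hω₂.ne']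
end

section
/- For every integer m ≥ 2 there exist real polynomials P, Q, R, N in two variables, with P and R of total degree at most m−1 and Q and N of total degree at most m, such that for all real x₁, x₂, writing y₁ = x₁² − x₂² and y₂ = 2x₁x₂: if m is even then x₁^{2m} − x₂^{2m} = (x₁² + x₂²)·P(y₁,y₂) and x₁^{2m} + x₂^{2m} = N(y₁,y₂); and if m is odd then x₁^{2m} − x₂^{2m} = Q(y₁,y₂) and x₁^{2m} + x₂^{2m} = (x₁² + x₂²)·R(y₁,y₂). -/
/-!
With `s = x₁² + x₂²` one has `s² = y₁² + y₂²`, `y₁ + s = 2x₁²` and `y₁ - s = -2x₂²`. Expanding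
`(y₁ + σ)ᵐ = A + σB` with `σ² = y₁² + y₂²` gives polynomials `A`, `B` in `y₁, y₂`, homogeneous of
degrees `m` and `m - 1`; evaluating at `σ = s` and `σ = -s` yields
`2ᵐ x₁²ᵐ = A + sB` and `(-2)ᵐ x₂²ᵐ = A - sB`. Adding and subtracting, `x₁²ᵐ ± x₂²ᵐ` is `2A / 2ᵐ`
or `2sB / 2ᵐ`, according to the sign and the parity of `m`.
-/

open MvPolynomial

/-- The pair `(A, B)` with `(X₀ + σ) ^ m = A + σ * B` in `R[X₀, X₁][σ] / (σ ^ 2 - X₀ ^ 2 - X₁ ^ 2)`. -/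
noncomputable def sqrtNormPowCoeffs (R : Type*) [CommSemiring R] :
    ℕ → MvPolynomial (Fin 2) R × MvPolynomial (Fin 2) R
  | 0 => (1, 0)
  | m + 1 =>
    ((sqrtNormPowCoeffs R m).1 * X 0 + (sqrtNormPowCoeffs R m).2 * (X 0 ^ 2 + X 1 ^ 2),
      (sqrtNormPowCoeffs R m).1 + (sqrtNormPowCoeffs R m).2 * X 0)

variable {R : Type*}

theorem isHomogeneous_sqrtNormPowCoeffs [CommSemiring R] :
    ∀ m, (sqrtNormPowCoeffs R m).1.IsHomogeneous m ∧
      (sqrtNormPowCoeffs R m).2.IsHomogeneous (m - 1)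
  | 0 => ⟨isHomogeneous_one _ _, isHomogeneous_zero _ _ _⟩
  | 1 => by
    simp only [sqrtNormPowCoeffs, one_mul, zero_mul, add_zero]
    exact ⟨isHomogeneous_X _ _, isHomogeneous_one _ _⟩
  | m + 2 => by
    obtain ⟨hA, hB⟩ := isHomogeneous_sqrtNormPowCoeffs (m + 1)
    have hX := isHomogeneous_X R (0 : Fin 2)
    have hS : (X 0 ^ 2 + X 1 ^ 2 : MvPolynomial (Fin 2) R).IsHomogeneous 2 :=
      ((isHomogeneous_X R 0).pow 2).add ((isHomogeneous_X R 1).pow 2)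
    exact ⟨(hA.mul hX).add (hB.mul hS), hA.add (hB.mul hX)⟩

theorem eval_sqrtNormPowCoeffs [CommRing R] {d t s : R} (hs : s ^ 2 = d ^ 2 + t ^ 2) (m : ℕ) :
    eval ![d, t] (sqrtNormPowCoeffs R m).1 + s * eval ![d, t] (sqrtNormPowCoeffs R m).2 =
      (d + s) ^ m := by
  induction m with
  | zero => simp [sqrtNormPowCoeffs]
  | succ m ih =>
    simp only [sqrtNormPowCoeffs, map_add, map_mul, map_pow, eval_X, pow_succ, ← ih]
    simp only [Matrix.cons_val_zero, Matrix.cons_val_one, Matrix.cons_val_fin_one]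
    linear_combination -eval ![d, t] (sqrtNormPowCoeffs R m).2 * hs

theorem stmt_6_general (m : ℕ) :
    ∃ P Q R N : MvPolynomial (Fin 2) ℝ,
      P.totalDegree ≤ m - 1 ∧ R.totalDegree ≤ m - 1 ∧
      Q.totalDegree ≤ m ∧ N.totalDegree ≤ m ∧
      ∀ x₁ x₂ : ℝ,
        (Even m →
          x₁ ^ (2 * m) - x₂ ^ (2 * m) =
            (x₁ ^ 2 + x₂ ^ 2) * MvPolynomial.eval ![x₁ ^ 2 - x₂ ^ 2, 2 * x₁ * x₂] P ∧
          x₁ ^ (2 * m) + x₂ ^ (2 * m) =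
            MvPolynomial.eval ![x₁ ^ 2 - x₂ ^ 2, 2 * x₁ * x₂] N) ∧
        (Odd m →
          x₁ ^ (2 * m) - x₂ ^ (2 * m) =
            MvPolynomial.eval ![x₁ ^ 2 - x₂ ^ 2, 2 * x₁ * x₂] Q ∧
          x₁ ^ (2 * m) + x₂ ^ (2 * m) =
            (x₁ ^ 2 + x₂ ^ 2) * MvPolynomial.eval ![x₁ ^ 2 - x₂ ^ 2, 2 * x₁ * x₂] R) := by
  obtain ⟨hA, hB⟩ := isHomogeneous_sqrtNormPowCoeffs (R := ℝ) m
  set c : ℝ := 2 / 2 ^ m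
  have hdeg {p : MvPolynomial (Fin 2) ℝ} {n : ℕ} (hp : p.IsHomogeneous n) :
      (c • p).totalDegree ≤ n :=
    (totalDegree_smul_le c p).trans hp.totalDegree_le
  refine ⟨c • _, c • _, c • _, c • _, hdeg hB, hdeg hB, hdeg hA, hdeg hA, fun x₁ x₂ => ?_⟩
  have hplus := eval_sqrtNormPowCoeffs
    (by ring : (x₁ ^ 2 + x₂ ^ 2) ^ 2 = (x₁ ^ 2 - x₂ ^ 2) ^ 2 + (2 * x₁ * x₂) ^ 2) m
  have hminus := eval_sqrtNormPowCoeffs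
    (by ring : (-(x₁ ^ 2 + x₂ ^ 2)) ^ 2 = (x₁ ^ 2 - x₂ ^ 2) ^ 2 + (2 * x₁ * x₂) ^ 2) m
  rw [show x₁ ^ 2 - x₂ ^ 2 + (x₁ ^ 2 + x₂ ^ 2) = 2 * x₁ ^ 2 by ring, mul_pow, ← pow_mul] at hplus
  rw [show x₁ ^ 2 - x₂ ^ 2 + -(x₁ ^ 2 + x₂ ^ 2) = -2 * x₂ ^ 2 by ring, mul_pow, ← pow_mul] at hminus
  have h2 : (2 : ℝ) ^ m ≠ 0 := by positivity
  simp only [smul_eval, c]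
  generalize eval ![x₁ ^ 2 - x₂ ^ 2, 2 * x₁ * x₂] (sqrtNormPowCoeffs ℝ m).1 = a at *
  generalize eval ![x₁ ^ 2 - x₂ ^ 2, 2 * x₁ * x₂] (sqrtNormPowCoeffs ℝ m).2 = b at *
  refine ⟨fun hm => ?_, fun hm => ?_⟩
  · rw [hm.neg_pow] at hminus
    constructor <;> field_simp
    · linear_combination hminus - hplus
    · linear_combination -(hplus + hminus)
  · rw [hm.neg_pow] at hminus
    constructor <;> field_simp
    · linear_combination -(hplus + hminus)
    · linear_combination hminus - hplus

/-- polynomial identities for `x₁^{2m} ± x₂^{2m}` in the variables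
`y₁ = x₁² − x₂²`, `y₂ = 2x₁x₂`. -/
theorem stmt_6 (m : ℕ) (hm : 2 ≤ m) :
    ∃ P Q R N : MvPolynomial (Fin 2) ℝ,
      P.totalDegree ≤ m - 1 ∧ R.totalDegree ≤ m - 1 ∧
      Q.totalDegree ≤ m ∧ N.totalDegree ≤ m ∧
      ∀ x₁ x₂ : ℝ,
        (Even m →
          x₁ ^ (2 * m) - x₂ ^ (2 * m) =
            (x₁ ^ 2 + x₂ ^ 2) * MvPolynomial.eval ![x₁ ^ 2 - x₂ ^ 2, 2 * x₁ * x₂] P ∧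
          x₁ ^ (2 * m) + x₂ ^ (2 * m) =
            MvPolynomial.eval ![x₁ ^ 2 - x₂ ^ 2, 2 * x₁ * x₂] N) ∧
        (Odd m →
          x₁ ^ (2 * m) - x₂ ^ (2 * m) =
            MvPolynomial.eval ![x₁ ^ 2 - x₂ ^ 2, 2 * x₁ * x₂] Q ∧
          x₁ ^ (2 * m) + x₂ ^ (2 * m) =
            (x₁ ^ 2 + x₂ ^ 2) * MvPolynomial.eval ![x₁ ^ 2 - x₂ ^ 2, 2 * x₁ * x₂] R) :=
  stmt_6_general m
end

section
/- Let ν₁ < ν₀ and ω > 0, and let φ : ℝ → ℝ be a C^∞ function satisfying: φ(−x) = φ(x) and φ(ω + x) = φ(ω − x) for all x; φ(0) = ν₁, φ(ω) = ν₀; φ′(x) > 0 for x ∈ (0,ω); φ″(0) > 0 and φ″(ω) < 0. Then the restriction φ : [0,ω] → [ν₁,ν₀] is a homeomorphism whose inverse f : [ν₁,ν₀] → [0,ω] is C^∞ on (ν₁,ν₀) with f′ > 0 there, and there exist C^∞ functions F⁺ and F⁻ on a neighborhood of 0 in ℝ such that f(x) = F⁺(√(x−ν₁)) for x near ν₁,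 f(x) = F⁻(√(ν₀−x)) for x near ν₀, F⁺(0) = 0, F⁻(0) = ω, (F⁺)′(0) = √(2/φ″(0)), and (F⁻)′(0) = −√(−2/φ″(ω)). -/
open Set

open Filter Topology


lemma aux_inv {a b : ℝ} (hab : a < b) {h : ℝ → ℝ}
    (hc : ContinuousOn h (Icc a b)) (hm : StrictMonoOn h (Icc a b)) :
    ∃ H : ℝ → ℝ, (∀ x ∈ Icc a b, H (h x) = x) ∧
      (∀ t ∈ Icc (h a) (h b), H t ∈ Icc a b ∧ h (H t) = t) ∧
      ContinuousOn H (Icc (h a) (h b)) := by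
  have haI : a ∈ Icc a b := left_mem_Icc.2 hab.le
  have hbI : b ∈ Icc a b := right_mem_Icc.2 hab.le
  have hsurj : ∀ t ∈ Icc (h a) (h b), ∃ x ∈ Icc a b, h x = t := fun t ht =>
    intermediate_value_Icc hab.le hc ht
  classical
  set H : ℝ → ℝ := fun t => if ht : t ∈ Icc (h a) (h b) then (hsurj t ht).choose else a with hH
  have hright : ∀ t ∈ Icc (h a) (h b), H t ∈ Icc a b ∧ h (H t) = t := by
    intro t ht
    have := (hsurj t ht).choose_spec
    simp only [hH, dif_pos ht]
    exact this
  have hmem : ∀ x ∈ Icc a b, h x ∈ Icc (h a) (h b) := fun x hx =>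
    ⟨hm.monotoneOn haI hx hx.1, hm.monotoneOn hx hbI hx.2⟩
  have hleft : ∀ x ∈ Icc a b, H (h x) = x := by
    intro x hx
    obtain ⟨hx', he⟩ := hright (h x) (hmem x hx)
    exact hm.injOn hx' hx he
  refine ⟨H, hleft, hright, ?_⟩
  have hHmono : StrictMonoOn H (Icc (h a) (h b)) := by
    intro t1 h1 t2 h2 hlt
    by_contra hcon
    push_neg at hcon
    have := hm.monotoneOn (hright t2 h2).1 (hright t1 h1).1 hcon
    rw [(hright t1 h1).2, (hright t2 h2).2] at this
    exact absurd hlt (not_lt.2 this)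
  intro t₀ ht₀
  have hab' : h a < h b := hm haI hbI hab
  have hL : h a < t₀ → ContinuousWithinAt H (Iic t₀) t₀ := by
    intro hlt
    apply hHmono.continuousWithinAt_left_of_exists_between
      (Icc_mem_nhdsLE_of_mem ⟨hlt, ht₀.2⟩)
    intro c hc'
    have hx₀ : a < H t₀ := by
      rcases lt_or_eq_of_le (hright t₀ ht₀).1.1 with hh | hh
      · exact hh
      · exfalso; rw [hh] at hlt
        rw [(hright t₀ ht₀).2] at hlt; exact lt_irrefl _ hlt
    set x' := max c a with hx'
    have hcb : c ≤ b := (lt_of_lt_of_le hc' (hright t₀ ht₀).1.2).le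
    have hx'mem : x' ∈ Icc a b := ⟨le_max_right _ _, max_le hcb hab.le⟩
    refine ⟨h x', hmem x' hx'mem, ?_, ?_⟩
    · rw [hleft x' hx'mem]; exact le_max_left _ _
    · rw [hleft x' hx'mem]; exact max_lt hc' hx₀
  have hR : t₀ < h b → ContinuousWithinAt H (Ici t₀) t₀ := by
    intro hlt
    apply hHmono.continuousWithinAt_right_of_exists_between
      (Icc_mem_nhdsGE_of_mem ⟨ht₀.1, hlt⟩)
    intro c hc'
    have hx₀ : H t₀ < b := by
      rcases lt_or_eq_of_le (hright t₀ ht₀).1.2 with hh | hh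
      · exact hh
      · exfalso; rw [← hh] at hlt
        rw [(hright t₀ ht₀).2] at hlt; exact lt_irrefl _ hlt
    set x' := min c b with hx'
    have hac : a ≤ c := ((hright t₀ ht₀).1.1.trans_lt hc').le
    have hx'mem : x' ∈ Icc a b := ⟨le_min hac hab.le, min_le_right _ _⟩
    refine ⟨h x', hmem x' hx'mem, ?_, ?_⟩
    · rw [hleft x' hx'mem]; exact lt_min hc' hx₀
    · rw [hleft x' hx'mem]; exact min_le_left _ _
  rcases eq_or_lt_of_le ht₀.1 with h1 | h1
  · exact ((hR (h1 ▸ hab')).mono (fun z hz => h1 ▸ hz.1)).mono (fun z hz => hz)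
  rcases eq_or_lt_of_le ht₀.2 with h2 | h2
  · exact ((hL h1).mono (fun z hz => h2 ▸ hz.2))
  · exact ((hL h1).union (hR h2)).mono (fun z _ => le_total z t₀)

lemma aux_smoothInvAt {h H : ℝ → ℝ} {x₀ t₀ : ℝ}
    (hc : ContDiffAt ℝ (⊤ : ℕ∞) h x₀) (hd0 : deriv h x₀ ≠ 0) (hx : h x₀ = t₀)
    (hH0 : H t₀ = x₀) (hHc : ContinuousAt H t₀)
    (hHr : ∀ᶠ t in 𝓝 t₀, h (H t) = t) :
    ContDiffAt ℝ (⊤ : ℕ∞) H t₀ ∧ HasDerivAt H (deriv h x₀)⁻¹ t₀ := by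
  have hdiff : DifferentiableAt ℝ h x₀ := hc.differentiableAt (by simp)
  have hder : HasDerivAt h (deriv h x₀) x₀ := hdiff.hasDerivAt
  have hs : HasStrictDerivAt h (deriv h x₀) x₀ := hc.hasStrictDerivAt (by simp)
  have hsf := hs.hasStrictFDerivAt_equiv hd0
  have hfd := hsf.hasFDerivAt
  set L := hc.localInverse hfd (by simp) with hL
  have evL : ∀ᶠ x in 𝓝 x₀, L (h x) = x :=
    (hc.hasStrictFDerivAt' hfd (by simp)).eventually_left_inverse
  have hHt : Tendsto H (𝓝 t₀) (𝓝 x₀) := hH0 ▸ hHc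
  have evH : H =ᶠ[𝓝 t₀] L := by
    filter_upwards [hHt.eventually evL, hHr] with t h1 h2
    rw [← h1, h2]
  have cdL : ContDiffAt ℝ (⊤ : ℕ∞) L (h x₀) := hc.to_localInverse hfd (by simp)
  rw [hx] at cdL
  refine ⟨cdL.congr_of_eventuallyEq evH, ?_⟩
  have hht : Tendsto h (𝓝 x₀) (𝓝 t₀) := hx ▸ hdiff.continuousAt
  have hg : ∀ᶠ x in 𝓝 x₀, H (h x) = x := by
    filter_upwards [hht.eventually evH, evL] with x h1 h2
    rw [h1, h2]
  have := (hs.to_local_left_inverse hd0 hg).hasDerivAt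
  rwa [hx] at this

lemma aux_paramDeriv (k : ℕ) {G : ℝ → ℝ} (hG : ContDiff ℝ (⊤ : ℕ∞) G) (x₀ : ℝ) :
    HasDerivAt (fun x => ∫ t in (0:ℝ)..1, t ^ k * G (t * x))
      (∫ t in (0:ℝ)..1, t ^ (k+1) * deriv G (t * x₀)) x₀ := by
  have hGd : Differentiable ℝ G := hG.differentiable (by simp)
  have hGc : Continuous G := hG.continuous
  have hG'c : Continuous (deriv G) := hG.continuous_deriv (by simp)
  obtain ⟨C, hC⟩ := (isCompact_closedBall (0:ℝ) (|x₀| + 1)).exists_bound_of_continuousOn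
    hG'c.continuousOn
  have key := intervalIntegral.hasDerivAt_integral_of_dominated_loc_of_deriv_le
    (μ := MeasureTheory.volume) (a := 0) (b := 1)
    (F := fun x t => t ^ k * G (t * x)) (F' := fun x t => t ^ (k+1) * deriv G (t * x))
    (x₀ := x₀) (bound := fun _ => C) (Metric.ball_mem_nhds x₀ one_pos) ?_ ?_ ?_ ?_ ?_ ?_
  · exact key.2
  · exact Filter.Eventually.of_forall (fun x =>
      ((continuous_pow k).mul (hGc.comp (continuous_id.mul continuous_const))).aestronglyMeasurable)
  · exact ((continuous_pow k).mul (hGc.comp (continuous_id.mul continuous_const))).intervalIntegrable 0 1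
  · exact ((continuous_pow (k+1)).mul
      (hG'c.comp (continuous_id.mul continuous_const))).aestronglyMeasurable
  · refine Filter.Eventually.of_forall (fun t ht x hx => ?_)
    rw [Set.uIoc_of_le zero_le_one] at ht
    have ht0 : 0 ≤ t := ht.1.le
    have ht1 : t ≤ 1 := ht.2
    have hxb : |x| ≤ |x₀| + 1 := by
      have h1 := Metric.mem_ball.1 hx
      rw [Real.dist_eq] at h1
      have h2 := abs_sub_abs_le_abs_sub x x₀
      linarith
    have hmem : t * x ∈ Metric.closedBall (0:ℝ) (|x₀|+1) := by
      rw [Metric.mem_closedBall, Real.dist_eq, sub_zero, abs_mul, abs_of_nonneg ht0]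
      nlinarith [abs_nonneg x]
    have h1 := hC _ hmem
    show ‖t ^ (k+1) * deriv G (t * x)‖ ≤ C
    rw [norm_mul, norm_pow, Real.norm_of_nonneg ht0]
    have h3 : t ^ (k+1) ≤ 1 := pow_le_one₀ ht0 ht1
    calc t ^ (k+1) * ‖deriv G (t * x)‖ ≤ 1 * C :=
          mul_le_mul h3 h1 (norm_nonneg _) zero_le_one
      _ = C := one_mul C
  · exact intervalIntegrable_const
  · refine Filter.Eventually.of_forall (fun t _ x _ => ?_)
    have h1 := (hGd (t * x)).hasDerivAt.comp x ((hasDerivAt_id' x).const_mul t)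
    have h2 := h1.const_mul (t ^ k)
    have h3 : t ^ (k+1) * deriv G (t * x) = t ^ k * (deriv G (t * x) * (t * 1)) := by ring
    rw [h3]
    exact h2

lemma aux_paramSmooth (n : ℕ) : ∀ (k : ℕ) (G : ℝ → ℝ), ContDiff ℝ (⊤ : ℕ∞) G →
    ContDiff ℝ n (fun x => ∫ t in (0:ℝ)..1, t ^ k * G (t * x)) := by
  induction n with
  | zero =>
    intro k G hG
    have hGc : Continuous G := hG.continuous
    rw [Nat.cast_zero, contDiff_zero]
    exact intervalIntegral.continuous_parametric_intervalIntegral_of_continuous'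
      (by fun_prop) 0 1
  | succ n ih =>
    intro k G hG
    have hd : deriv (fun x => ∫ t in (0:ℝ)..1, t ^ k * G (t * x)) =
        fun x => ∫ t in (0:ℝ)..1, t ^ (k+1) * deriv G (t * x) :=
      funext fun x => (aux_paramDeriv k hG x).deriv
    rw [show ((n+1 : ℕ) : WithTop ℕ∞) = (n : WithTop ℕ∞) + 1 by push_cast; rfl,
      contDiff_succ_iff_deriv]
    refine ⟨fun x => (aux_paramDeriv k hG x).differentiableAt, by simp, ?_⟩
    rw [hd]
    exact ih (k+1) (deriv G) (contDiff_infty_iff_deriv.1 hG).2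

lemma aux_hadamard1 {F : ℝ → ℝ} (hF : ContDiff ℝ (⊤ : ℕ∞) F) :
    ∃ G : ℝ → ℝ, ContDiff ℝ (⊤ : ℕ∞) G ∧ G 0 = deriv F 0 ∧ ∀ x, F x = F 0 + x * G x := by
  have hFd : Differentiable ℝ F := hF.differentiable (by simp)
  refine ⟨fun x => ∫ t in (0:ℝ)..1, t ^ 0 * deriv F (t * x),
    contDiff_infty.2 fun n => aux_paramSmooth n 0 _ (contDiff_infty_iff_deriv.1 hF).2, ?_, ?_⟩
  · simp
  · intro x
    rcases eq_or_ne x 0 with rfl | hx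
    · simp
    · simp only [pow_zero, one_mul]
      have := intervalIntegral.integral_comp_mul_right (f := deriv F) (a := 0) (b := 1) hx
      rw [this, zero_mul, one_mul, intervalIntegral.integral_deriv_eq_sub (fun y _ => hFd y)
        ((hF.continuous_deriv (by simp)).intervalIntegrable 0 x), smul_eq_mul, ← mul_assoc,
        mul_inv_cancel₀ hx, one_mul]
      ring

lemma aux_hadamard2 {ψ : ℝ → ℝ} (hψ : ContDiff ℝ (⊤ : ℕ∞) ψ) (h0 : ψ 0 = 0)
    (h1 : deriv ψ 0 = 0) :
    ∃ g : ℝ → ℝ, ContDiff ℝ (⊤ : ℕ∞) g ∧ g 0 = iteratedDeriv 2 ψ 0 / 2 ∧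
      ∀ x, ψ x = x ^ 2 * g x := by
  obtain ⟨G, hG, hG0, hGid⟩ := aux_hadamard1 hψ
  obtain ⟨K, hK, hK0, hKid⟩ := aux_hadamard1 hG
  have hGd : Differentiable ℝ G := hG.differentiable (by simp)
  have hG'd : Differentiable ℝ (deriv G) :=
    (contDiff_infty_iff_deriv.1 hG).2.differentiable (by simp)
  have hψeq : ψ = fun x => x * G x := funext fun x => by rw [hGid x, h0, zero_add]
  have hdψ : deriv ψ = fun x => G x + x * deriv G x := by
    funext x
    rw [hψeq]
    have H : deriv (fun x => x * G x) x = 1 * G x + x * deriv G x :=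
      ((hasDerivAt_id' x).mul (hGd x).hasDerivAt).deriv
    rw [H]; ring
  have h2 : iteratedDeriv 2 ψ 0 = 2 * deriv G 0 := by
    rw [show (2:ℕ) = 1 + 1 from rfl, iteratedDeriv_succ, iteratedDeriv_one, hdψ]
    have H : deriv (fun x => G x + x * deriv G x) 0 =
        deriv G 0 + (1 * deriv G 0 + 0 * deriv (deriv G) 0) :=
      ((hGd 0).hasDerivAt.add ((hasDerivAt_id' 0).mul (hG'd 0).hasDerivAt)).deriv
    rw [H]; ring
  refine ⟨K, hK, ?_, ?_⟩
  · rw [hK0, h2]; ring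
  · intro x
    rw [hψeq]
    show x * G x = x ^ 2 * K x
    rw [hKid x, hG0, h1]; ring

lemma aux_end {χ : ℝ → ℝ} (hχ : ContDiff ℝ (⊤ : ℕ∞) χ) (h0 : χ 0 = 0)
    (h1 : deriv χ 0 = 0) (hA : 0 < iteratedDeriv 2 χ 0) {W : ℝ} (hW : 0 < W) :
    ∃ ε' δ0 : ℝ, ∃ H h : ℝ → ℝ, 0 < ε' ∧ ε' ≤ W ∧ 0 < δ0 ∧
      ContDiffOn ℝ (⊤ : ℕ∞) H (Ioo (-δ0) δ0) ∧ H 0 = 0 ∧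
      deriv H 0 = Real.sqrt (2 / iteratedDeriv 2 χ 0) ∧
      (∀ u ∈ Icc 0 ε', h u ^ 2 = χ u ∧ 0 ≤ h u ∧ H (h u) = u) ∧
      δ0 ≤ χ ε' := by
  obtain ⟨g, hga, hg0, hgid⟩ := aux_hadamard2 hχ h0 h1
  set A := iteratedDeriv 2 χ 0 with hA'
  have hg0pos : 0 < g 0 := by rw [hg0]; positivity
  set h : ℝ → ℝ := fun u => u * Real.sqrt (g u) with hh
  have hsq0 : ContDiffAt ℝ (⊤ : ℕ∞) (fun y => Real.sqrt (g y)) 0 :=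
    (Real.contDiffAt_sqrt hg0pos.ne').comp 0 hga.contDiffAt
  have hh0cd : ContDiffAt ℝ (⊤ : ℕ∞) h 0 := contDiffAt_id.mul hsq0
  have hgs : HasDerivAt (fun y => Real.sqrt (g y)) (deriv g 0 / (2 * Real.sqrt (g 0))) 0 :=
    (hga.differentiable (by simp) 0).hasDerivAt.sqrt hg0pos.ne'
  have hhd : HasDerivAt h (Real.sqrt (g 0)) 0 := by
    have := (hasDerivAt_id (0:ℝ)).mul hgs
    exact this.congr_deriv (by simp)
  have hder0 : deriv h 0 = Real.sqrt (g 0) := hhd.deriv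
  have hdpos0 : 0 < deriv h 0 := by rw [hder0]; exact Real.sqrt_pos.2 hg0pos
  have hdercont : ContinuousAt (deriv h) 0 := by
    have hU : IsOpen {x | 0 < g x} := isOpen_lt continuous_const hga.continuous
    have hcdU : ContDiffOn ℝ (⊤ : ℕ∞) h {x | 0 < g x} := fun x hx =>
      (contDiffAt_id.mul ((Real.contDiffAt_sqrt (show 0 < g x from hx).ne').comp x
        hga.contDiffAt)).contDiffWithinAt
    exact (hcdU.continuousOn_deriv_of_isOpen hU (by simp)).continuousAt (hU.mem_nhds hg0pos)
  have evg : ∀ᶠ x in 𝓝 (0:ℝ), ContDiffAt ℝ (⊤ : ℕ∞) g x :=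
    Filter.Eventually.of_forall (fun x => hga.contDiffAt)
  have evgpos : ∀ᶠ x in 𝓝 (0:ℝ), 0 < g x :=
    hga.continuous.continuousAt.eventually (eventually_gt_nhds hg0pos)
  have evdpos : ∀ᶠ x in 𝓝 (0:ℝ), 0 < deriv h x :=
    hdercont.eventually (eventually_gt_nhds hdpos0)
  have evall : ∀ᶠ x in 𝓝 (0:ℝ), ContDiffAt ℝ (⊤ : ℕ∞) h x ∧ 0 < deriv h x ∧ 0 < g x := by
    filter_upwards [evg, evgpos, evdpos] with x h1 h2 h3
    exact ⟨contDiffAt_id.mul ((Real.contDiffAt_sqrt h2.ne').comp x h1), h3, h2⟩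
  rw [Metric.eventually_nhds_iff] at evall
  obtain ⟨ε, hεpos, hball⟩ := evall
  set ε' := min (ε/2) W with hε'
  have hε'pos : 0 < ε' := lt_min (by linarith) hW
  have hε'W : ε' ≤ W := min_le_right _ _
  have hIP : ∀ x ∈ Icc (-ε') ε', ContDiffAt ℝ (⊤ : ℕ∞) h x ∧ 0 < deriv h x ∧ 0 < g x := by
    intro x hx
    apply hball
    rw [Real.dist_eq, sub_zero]
    have h1 : |x| ≤ ε' := abs_le.2 ⟨hx.1, hx.2⟩
    calc |x| ≤ ε' := h1
      _ ≤ ε/2 := min_le_left _ _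
      _ < ε := by linarith
  have hcontI : ContinuousOn h (Icc (-ε') ε') := fun x hx =>
    ((hIP x hx).1.continuousAt).continuousWithinAt
  have hsmI : StrictMonoOn h (Icc (-ε') ε') := by
    apply strictMonoOn_of_deriv_pos (convex_Icc _ _) hcontI
    rw [interior_Icc]
    exact fun x hx => (hIP x (Ioo_subset_Icc_self hx)).2.1
  have hnn : -ε' < ε' := by linarith
  have h0I : (0:ℝ) ∈ Icc (-ε') ε' := ⟨by linarith, hε'pos.le⟩
  have hε'I : ε' ∈ Icc (-ε') ε' := right_mem_Icc.2 hnn.le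
  have hnegI : -ε' ∈ Icc (-ε') ε' := left_mem_Icc.2 hnn.le
  have hval : h 0 = 0 := by simp [hh]
  have hpos : 0 < h ε' := by
    have := hsmI h0I hε'I hε'pos
    rwa [hval] at this
  have hneg : h (-ε') < 0 := by
    have := hsmI hnegI h0I (by linarith)
    rwa [hval] at this
  obtain ⟨H, Hl, Hr, Hc⟩ := aux_inv hnn hcontI hsmI
  have H0 : H 0 = 0 := by
    have := Hl 0 h0I
    rwa [hval] at this
  have hχε' : χ ε' = h ε' ^ 2 := by
    have hgε' : 0 ≤ g ε' := (hIP ε' hε'I).2.2.le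
    rw [hgid ε', hh]
    rw [mul_pow, Real.sq_sqrt hgε']
  set δ0 := min (min (h ε') (-h (-ε'))) (χ ε') with hδ0
  have hδ0pos : 0 < δ0 := by
    apply lt_min (lt_min hpos (by linarith))
    rw [hχε']; positivity
  -- smoothness of H at each point of Ioo (-δ0) δ0
  have hkey : ∀ t₀ ∈ Ioo (-δ0) δ0, ContDiffAt ℝ (⊤ : ℕ∞) H t₀ ∧
      HasDerivAt H (deriv h (H t₀))⁻¹ t₀ := by
    intro t₀ ht₀
    have htlo : h (-ε') < t₀ := by
      have : -δ0 ≥ -(-h (-ε')) := by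
        have : δ0 ≤ -h (-ε') := le_trans (min_le_left _ _) (min_le_right _ _)
        linarith
      have := ht₀.1
      linarith
    have hthi : t₀ < h ε' := lt_of_lt_of_le ht₀.2 (le_trans (min_le_left _ _) (min_le_left _ _))
    have tIcc : t₀ ∈ Icc (h (-ε')) (h ε') := ⟨htlo.le, hthi.le⟩
    obtain ⟨hx₀I, hx₀⟩ := Hr t₀ tIcc
    set x₀ := H t₀
    have hx₀lt : x₀ < ε' := by
      rcases lt_or_eq_of_le hx₀I.2 with hlt | heq
      · exact hlt
      · exfalso; rw [heq] at hx₀; rw [hx₀] at hthi; exact lt_irrefl _ hthi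
    have hx₀gt : -ε' < x₀ := by
      rcases lt_or_eq_of_le hx₀I.1 with hlt | heq
      · exact hlt
      · exfalso; rw [← heq] at hx₀; rw [hx₀] at htlo; exact lt_irrefl _ htlo
    exact aux_smoothInvAt (hIP x₀ hx₀I).1 (hIP x₀ hx₀I).2.1.ne' hx₀ rfl
      (Hc.continuousAt (Icc_mem_nhds htlo hthi))
      (by filter_upwards [Icc_mem_nhds htlo hthi] with t ht; exact (Hr t ht).2)
  have HcdOn : ContDiffOn ℝ (⊤ : ℕ∞) H (Ioo (-δ0) δ0) := fun t ht =>
    ((hkey t ht).1).contDiffWithinAt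
  have h0mem : (0:ℝ) ∈ Ioo (-δ0) δ0 := ⟨by linarith, hδ0pos⟩
  have hderH0 : deriv H 0 = Real.sqrt (2 / A) := by
    have := (hkey 0 h0mem).2
    rw [H0] at this
    rw [this.deriv, hder0, hg0, ← Real.sqrt_inv, inv_div]
  refine ⟨ε', δ0, H, h, hε'pos, hε'W, hδ0pos, HcdOn, H0, hderH0, ?_, min_le_right _ _⟩
  intro u hu
  have huI : u ∈ Icc (-ε') ε' := ⟨by linarith [hu.1], hu.2⟩
  have hgu : 0 ≤ g u := (hIP u huI).2.2.le
  refine ⟨?_, mul_nonneg hu.1 (Real.sqrt_nonneg _), Hl u huI⟩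
  rw [hh, mul_pow, Real.sq_sqrt hgu, ← hgid u]

/-- square-root expansion of the inverse of a smooth function with
nondegenerate even critical points at the endpoints. -/
theorem stmt_7 (ν₁ ν₀ ω : ℝ) (hν : ν₁ < ν₀) (hω : 0 < ω) (φ : ℝ → ℝ)
    (hφ : ContDiff ℝ (⊤ : ℕ∞) φ)
    (heven : ∀ x : ℝ, φ (-x) = φ x)
    (hsym : ∀ x : ℝ, φ (ω + x) = φ (ω - x))
    (h0 : φ 0 = ν₁) (hw : φ ω = ν₀)
    (hmono : ∀ x ∈ Ioo 0 ω, 0 < deriv φ x)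
    (h2a : 0 < iteratedDeriv 2 φ 0) (h2b : iteratedDeriv 2 φ ω < 0) :
    ∃ f : ℝ → ℝ,
      MapsTo φ (Icc 0 ω) (Icc ν₁ ν₀) ∧
      (∀ x ∈ Icc 0 ω, f (φ x) = x) ∧
      (∀ y ∈ Icc ν₁ ν₀, f y ∈ Icc 0 ω ∧ φ (f y) = y) ∧
      ContinuousOn f (Icc ν₁ ν₀) ∧
      ContDiffOn ℝ (⊤ : ℕ∞) f (Ioo ν₁ ν₀) ∧
      (∀ y ∈ Ioo ν₁ ν₀, 0 < deriv f y) ∧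
      ∃ δ > 0, ∃ Fp Fm : ℝ → ℝ,
        ContDiffOn ℝ (⊤ : ℕ∞) Fp (Ioo (-δ) δ) ∧ ContDiffOn ℝ (⊤ : ℕ∞) Fm (Ioo (-δ) δ) ∧
        (∀ x ∈ Ico ν₁ (ν₁ + δ), f x = Fp (Real.sqrt (x - ν₁))) ∧
        (∀ x ∈ Ioc (ν₀ - δ) ν₀, f x = Fm (Real.sqrt (ν₀ - x))) ∧
        Fp 0 = 0 ∧ Fm 0 = ω ∧
        deriv Fp 0 = Real.sqrt (2 / iteratedDeriv 2 φ 0) ∧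
        deriv Fm 0 = -Real.sqrt (-2 / iteratedDeriv 2 φ ω) := by
  have hφa : ∀ x, ContDiffAt ℝ (⊤ : ℕ∞) φ x := fun x => hφ.contDiffAt
  have hφc : Continuous φ := hφ.continuous
  have e2 : ∀ F : ℝ → ℝ, iteratedDeriv 2 F = deriv (deriv F) := by
    intro F
    rw [show (2:ℕ) = 1 + 1 from rfl, iteratedDeriv_succ, iteratedDeriv_one]
  have hd00 : deriv φ 0 = 0 := by
    have h1 : deriv (fun x => φ (-x)) 0 = -deriv φ 0 := by
      rw [deriv_comp_neg]; simp
    rw [show (fun x => φ (-x)) = φ from funext heven] at h1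
    linarith
  have hdω : deriv φ ω = 0 := by
    have h1 : deriv (fun x => φ (ω + x)) 0 = deriv φ ω := by
      rw [deriv_comp_const_add]; simp
    have h2 : deriv (fun x => φ (ω - x)) 0 = -deriv φ ω := by
      rw [deriv_comp_const_sub]; simp
    rw [show (fun x => φ (ω + x)) = (fun x => φ (ω - x)) from funext hsym, h2] at h1
    linarith
  have hsm : StrictMonoOn φ (Icc 0 ω) := by
    apply strictMonoOn_of_deriv_pos (convex_Icc _ _) hφc.continuousOn
    rw [interior_Icc]; exact hmono
  have h0I : (0:ℝ) ∈ Icc 0 ω := left_mem_Icc.2 hω.le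
  have hωI : ω ∈ Icc 0 ω := right_mem_Icc.2 hω.le
  have hmaps : MapsTo φ (Icc 0 ω) (Icc ν₁ ν₀) := fun x hx =>
    ⟨h0 ▸ hsm.monotoneOn h0I hx hx.1, hw ▸ hsm.monotoneOn hx hωI hx.2⟩
  obtain ⟨f, hfl, hfr', hfc'⟩ := aux_inv hω hφc.continuousOn hsm
  rw [h0, hw] at hfr' hfc'
  have hkeyf : ∀ y ∈ Ioo ν₁ ν₀, ContDiffAt ℝ (⊤ : ℕ∞) f y ∧ 0 < deriv f y := by
    intro y hy
    have hyIcc : y ∈ Icc ν₁ ν₀ := Ioo_subset_Icc_self hy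
    obtain ⟨hfyI, hfy⟩ := hfr' y hyIcc
    set x₀ := f y with hx₀def
    have hx₀lt : x₀ < ω := by
      rcases lt_or_eq_of_le hfyI.2 with hlt|heq
      · exact hlt
      · exfalso; rw [heq, hw] at hfy; exact absurd hfy hy.2.ne'
    have hx₀gt : 0 < x₀ := by
      rcases lt_or_eq_of_le hfyI.1 with hlt|heq
      · exact hlt
      · exfalso; rw [← heq, h0] at hfy; exact absurd hfy hy.1.ne
    have hdpos := hmono x₀ ⟨hx₀gt, hx₀lt⟩
    obtain ⟨cd, hd⟩ := aux_smoothInvAt (hφa x₀) hdpos.ne' hfy rfl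
      (hfc'.continuousAt (Icc_mem_nhds hy.1 hy.2))
      (by filter_upwards [Icc_mem_nhds hy.1 hy.2] with t ht; exact (hfr' t ht).2)
    exact ⟨cd, by rw [hd.deriv]; exact inv_pos.2 hdpos⟩
  -- left end
  set χL : ℝ → ℝ := fun x => φ x - ν₁ with hχL
  have hχLa : ContDiff ℝ (⊤ : ℕ∞) χL := hφ.sub contDiff_const
  have hχL0 : χL 0 = 0 := by simp [hχL, h0]
  have hχLder : deriv χL = deriv φ := funext fun x => deriv_sub_const _
  have hχLd : deriv χL 0 = 0 := by rw [hχLder, hd00]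
  have hχL2 : iteratedDeriv 2 χL 0 = iteratedDeriv 2 φ 0 := by
    rw [e2, e2, hχLder]
  have hAL : 0 < iteratedDeriv 2 χL 0 := hχL2 ▸ h2a
  obtain ⟨εL, δL, HL, hLf, hεLpos, hεLW, hδLpos, HLcd, HL0, HLd, HLval, hδLχ⟩ :=
    aux_end hχLa hχL0 hχLd hAL hω
  -- right end
  set χR : ℝ → ℝ := fun u => ν₀ - φ (ω - u) with hχR
  have hχRa : ContDiff ℝ (⊤ : ℕ∞) χR :=
    contDiff_const.sub (hφ.comp (contDiff_const.sub contDiff_id))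
  have hχR0 : χR 0 = 0 := by simp [hχR, hw]
  have hχRder : deriv χR = fun u => deriv φ (ω - u) := by
    funext u
    rw [hχR]
    simp only [deriv_const_sub, deriv_comp_const_sub, neg_neg]
  have hχRd : deriv χR 0 = 0 := by rw [hχRder]; simpa using hdω
  have hχR2 : iteratedDeriv 2 χR 0 = -iteratedDeriv 2 φ ω := by
    rw [e2, e2, hχRder, deriv_comp_const_sub]
    simp
  have hAR : 0 < iteratedDeriv 2 χR 0 := by rw [hχR2]; linarith
  obtain ⟨εR, δR, HR, hRf, hεRpos, hεRW, hδRpos, HRcd, HR0, HRd, HRval, hδRχ⟩ :=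
    aux_end hχRa hχR0 hχRd hAR hω
  refine ⟨f, hmaps, hfl, hfr', hfc',
    fun y hy => ((hkeyf y hy).1).contDiffWithinAt, fun y hy => (hkeyf y hy).2, ?_⟩
  set δ := min (min δL δR) (ν₀ - ν₁) with hδdef
  have hδpos : 0 < δ := lt_min (lt_min hδLpos hδRpos) (by linarith)
  have hδL : δ ≤ δL := le_trans (min_le_left _ _) (min_le_left _ _)
  have hδR : δ ≤ δR := le_trans (min_le_left _ _) (min_le_right _ _)
  have hδν : δ ≤ ν₀ - ν₁ := min_le_right _ _
  refine ⟨δ, hδpos, HL, fun s => ω - HR s, ?_, ?_, ?_, ?_, HL0, by simp [HR0], ?_, ?_⟩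
  · exact HLcd.mono (Ioo_subset_Ioo (by linarith) hδL)
  · exact contDiffOn_const.sub (HRcd.mono (Ioo_subset_Ioo (by linarith) hδR))
  · -- left equation
    intro x hx
    have hxIcc : x ∈ Icc ν₁ ν₀ := ⟨hx.1, by have := hx.2; linarith⟩
    obtain ⟨huI, hu⟩ := hfr' x hxIcc
    set u := f x with hudef
    have huεL : u ≤ εL := by
      by_contra hcon
      push_neg at hcon
      have h1 : φ εL ≤ φ u := hsm.monotoneOn ⟨hεLpos.le, hεLW⟩ huI hcon.le
      have h3 : δ ≤ χL εL := le_trans hδL hδLχ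
      have h4 : χL εL = φ εL - ν₁ := rfl
      have := hx.2
      rw [hu] at h1
      linarith
    obtain ⟨hsq, hnn, hHu⟩ := HLval u ⟨huI.1, huεL⟩
    have hval : hLf u = Real.sqrt (x - ν₁) := by
      have h4 : hLf u ^ 2 = x - ν₁ := by
        rw [hsq]; show φ u - ν₁ = x - ν₁; rw [hu]
      rw [← h4, Real.sqrt_sq hnn]
    rw [← hval, hHu]
  · -- right equation
    intro x hx
    have hxIcc : x ∈ Icc ν₁ ν₀ := ⟨by have := hx.1; linarith, hx.2⟩
    obtain ⟨huI, hu⟩ := hfr' x hxIcc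
    set u := ω - f x with hudef
    have hfx : ω - u = f x := by rw [hudef]; ring
    have hu' : φ (ω - u) = x := by rw [hfx, hu]
    have hu0 : 0 ≤ u := by rw [hudef]; linarith [huI.2]
    have huω : u ≤ ω := by rw [hudef]; linarith [huI.1]
    have huεR : u ≤ εR := by
      by_contra hcon
      push_neg at hcon
      have hmem1 : ω - εR ∈ Icc 0 ω := ⟨by linarith, by linarith⟩
      have hmem2 : ω - u ∈ Icc 0 ω := ⟨by linarith, by linarith⟩
      have h1 : φ (ω - u) ≤ φ (ω - εR) := hsm.monotoneOn hmem2 hmem1 (by linarith)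
      have h3 : δ ≤ χR εR := le_trans hδR hδRχ
      have h4 : χR εR = ν₀ - φ (ω - εR) := rfl
      have := hx.1
      rw [hu'] at h1
      linarith
    obtain ⟨hsq, hnn, hHu⟩ := HRval u ⟨hu0, huεR⟩
    have hval : hRf u = Real.sqrt (ν₀ - x) := by
      have h4 : hRf u ^ 2 = ν₀ - x := by
        rw [hsq]; show ν₀ - φ (ω - u) = ν₀ - x; rw [hu']
      rw [← h4, Real.sqrt_sq hnn]
    rw [← hval]
    show f x = ω - HR (hRf u)
    rw [hHu]
    exact hfx.symm
  · rw [HLd, hχL2]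
  · have hder : deriv (fun s => ω - HR s) 0 = -deriv HR 0 := deriv_const_sub _
    rw [hder, HRd, hχR2, div_neg, neg_div]
end

section
/- Let x₁, x₂ be real numbers with 0 ≤ x₂ ≤ x₁ and let z be a real number with z·x₁ < 1 and z·x₂ < 1. Then ∫₀¹ 1 / ( √(t(1−t)) · (1 − z(x₂ + t(x₁−x₂))) ) dt = π / √((1−z·x₁)(1−z·x₂)). -/
/-! The substitution `t = s² / (1 + s²)` maps `(0, ∞)` onto `(0, 1)`, with `√(t(1-t)) = s / (1 + s²)`
and `dt = 2s / (1 + s²)² ds`. Writing the linear factor as `(1 - t) a + t b` with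
`a = 1 - z x₂`, `b = 1 - z x₁`, it turns the integral into `∫₀^∞ 2 / (a + b s²) ds`,
an arctangent integral equal to `π / √(ab)`. -/

open MeasureTheory Set Real

lemma integral_Ioi_inv_add_mul_sq {a b : ℝ} (ha : 0 < a) (hb : 0 < b) :
    ∫ s in Ioi (0 : ℝ), (a + b * s ^ 2)⁻¹ = π / (2 * √(a * b)) := by
  set c := √(b / a)
  have hc : 0 < c := sqrt_pos.2 (div_pos hb ha)
  have hac : a * c = √(a * b) := by
    rw [show a * b = a ^ 2 * (b / a) by field_simp, sqrt_mul (sq_nonneg a), sqrt_sq ha.le]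
  have hrescale : ∀ s : ℝ, (a + b * s ^ 2)⁻¹ = a⁻¹ * (1 + (c * s) ^ 2)⁻¹ := by
    intro s
    rw [mul_pow, sq_sqrt (div_pos hb ha).le]
    field_simp
  simp_rw [hrescale]
  rw [integral_const_mul, integral_comp_mul_left_Ioi (fun x => (1 + x ^ 2)⁻¹) 0 hc, mul_zero,
    integral_Ioi_inv_one_add_sq, arctan_zero, sub_zero, smul_eq_mul, ← hac]
  field_simp

lemma image_sq_div_one_add_sq_Ioi :
    (fun s : ℝ => s ^ 2 / (1 + s ^ 2)) '' Ioi 0 = Ioo 0 1 := by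
  ext t
  constructor
  · rintro ⟨s, hs : 0 < s, rfl⟩
    exact ⟨by positivity, (div_lt_one (by positivity)).2 (by linarith)⟩
  · rintro ⟨ht0, ht1⟩
    have hpos : 0 < t / (1 - t) := div_pos ht0 (sub_pos.2 ht1)
    refine ⟨√(t / (1 - t)), sqrt_pos.2 hpos, ?_⟩
    simp only [sq_sqrt hpos.le]
    field_simp
    ring

lemma injOn_sq_div_one_add_sq_Ioi : InjOn (fun s : ℝ => s ^ 2 / (1 + s ^ 2)) (Ioi 0) := by
  intro s hs s' hs' h
  have hsq : s ^ 2 = s' ^ 2 := by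
    field_simp at h
    linarith
  exact (pow_left_inj₀ (le_of_lt hs) (le_of_lt hs') two_ne_zero).1 hsq

lemma hasDerivAt_sq_div_one_add_sq (s : ℝ) :
    HasDerivAt (fun s : ℝ => s ^ 2 / (1 + s ^ 2)) (2 * s / (1 + s ^ 2) ^ 2) s := by
  have hsq : HasDerivAt (fun s : ℝ => s ^ 2) (2 * s) s := by
    simpa using hasDerivAt_pow 2 s
  refine (hsq.div (hsq.const_add 1) (by positivity)).congr_deriv ?_
  ring

theorem integral_Ioo_one_div_sqrt_mul_one_sub_mul_lineMap {a b : ℝ} (ha : 0 < a) (hb : 0 < b) :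
    ∫ t in Ioo (0 : ℝ) 1, 1 / (√(t * (1 - t)) * ((1 - t) * a + t * b)) = π / √(a * b) := by
  rw [← image_sq_div_one_add_sq_Ioi,
    integral_image_eq_integral_abs_deriv_smul measurableSet_Ioi
      (fun s _ => (hasDerivAt_sq_div_one_add_sq s).hasDerivWithinAt) injOn_sq_div_one_add_sq_Ioi]
  have hintegrand : EqOn
      (fun s : ℝ => |2 * s / (1 + s ^ 2) ^ 2| • (1 / (√(s ^ 2 / (1 + s ^ 2) *
        (1 - s ^ 2 / (1 + s ^ 2))) * ((1 - s ^ 2 / (1 + s ^ 2)) * a + s ^ 2 / (1 + s ^ 2) * b))))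
      (fun s => 2 * (a + b * s ^ 2)⁻¹) (Ioi 0) := by
    intro s (hs : 0 < s)
    dsimp only
    have hsqrt : √(s ^ 2 / (1 + s ^ 2) * (1 - s ^ 2 / (1 + s ^ 2))) = s / (1 + s ^ 2) := by
      rw [show s ^ 2 / (1 + s ^ 2) * (1 - s ^ 2 / (1 + s ^ 2)) = (s / (1 + s ^ 2)) ^ 2 by
        field_simp; ring]
      exact sqrt_sq (by positivity)
    have hlin : (1 - s ^ 2 / (1 + s ^ 2)) * a + s ^ 2 / (1 + s ^ 2) * b =
        (a + b * s ^ 2) / (1 + s ^ 2) := by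
      field_simp
      ring
    rw [hsqrt, hlin, abs_of_pos (by positivity), smul_eq_mul]
    field_simp
  rw [setIntegral_congr_fun measurableSet_Ioi hintegrand, integral_const_mul,
    integral_Ioi_inv_add_mul_sq ha hb]
  field_simp

theorem stmt_9_general (x₁ x₂ z : ℝ)
    (hz₁ : z * x₁ < 1) (hz₂ : z * x₂ < 1) :
    ∫ t in Ioo (0 : ℝ) 1,
        1 / (Real.sqrt (t * (1 - t)) * (1 - z * (x₂ + t * (x₁ - x₂)))) =
      Real.pi / Real.sqrt ((1 - z * x₁) * (1 - z * x₂)) := by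
  have hlin : ∀ t : ℝ,
      1 - z * (x₂ + t * (x₁ - x₂)) = (1 - t) * (1 - z * x₂) + t * (1 - z * x₁) := fun t => by ring
  simp_rw [hlin, mul_comm (1 - z * x₁)]
  exact integral_Ioo_one_div_sqrt_mul_one_sub_mul_lineMap (sub_pos.2 hz₂) (sub_pos.2 hz₁)

/-- `∫₀¹ dt/(√(t(1−t))(1−z(x₂+t(x₁−x₂)))) = π/√((1−zx₁)(1−zx₂))`. -/
theorem stmt_9 (x₁ x₂ z : ℝ) (h0 : 0 ≤ x₂) (h12 : x₂ ≤ x₁)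
    (hz₁ : z * x₁ < 1) (hz₂ : z * x₂ < 1) :
    ∫ t in Ioo (0 : ℝ) 1,
        1 / (Real.sqrt (t * (1 - t)) * (1 - z * (x₂ + t * (x₁ - x₂)))) =
      Real.pi / Real.sqrt ((1 - z * x₁) * (1 - z * x₂)) :=
  stmt_9_general x₁ x₂ z hz₁ hz₂
end

section
/- Let a < b be real numbers and let f : [a,b) × (a,b) → ℝ be a function such that f and its partial derivatives ∂f/∂x, ∂f/∂κ, ∂²f/∂x∂κ exist, are continuous, and are bounded on [a,b) × (a,b). Define F(κ) = ∫_a^κ f(x,κ)/√(κ−x) dx for κ ∈ (a,b). Then there is a constant C > 0 such that for all κ ∈ (a,b): (a) |F(κ) − 2 f(a,κ) √(κ−a)| ≤ C (κ−a)^{3/2}; and (b) F is differentiable at κ with |F′(κ) − f(a,κ)/√(κ−a)| ≤ C √(κ−a). -/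
open MeasureTheory Set Filter Topology

/-!
The substitution `x = κ - (κ - a) τ²` removes the singularity:
`F κ = 2 √(κ - a) Φ κ` with `Φ κ = ∫ τ in (0, 1), f (κ - (κ - a) τ²) κ`.
Since `κ - (κ - a) τ² ∈ (a, κ)`, a bound `M` on `∂f/∂x` gives `|Φ κ - f a κ| ≤ M (κ - a)`, and
differentiating under the integral sign (the integrand is `f`, which has continuous partial
derivatives, composed with a smooth curve) gives `|Φ'| ≤ 2 M` when `M` also bounds `∂f/∂κ`.
Both estimates then follow from the product rule for `2 √(κ - a) Φ κ`.
-/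

theorem hasDerivAt_comp_of_continuous_partials {f fx fy : ℝ → ℝ → ℝ} {u v : ℝ → ℝ} {t u' v' : ℝ}
    (hfx : ∀ᶠ p in 𝓝 (u t, v t), HasDerivAt (f · p.2) (fx p.1 p.2) p.1)
    (hfy : ∀ᶠ p in 𝓝 (u t, v t), HasDerivAt (f p.1 ·) (fy p.1 p.2) p.2)
    (hfxc : ContinuousAt (fun p : ℝ × ℝ => fx p.1 p.2) (u t, v t))
    (hfyc : ContinuousAt (fun p : ℝ × ℝ => fy p.1 p.2) (u t, v t))
    (hu : HasDerivAt u u' t) (hv : HasDerivAt v v' t) :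
    HasDerivAt (fun s => f (u s) (v s)) (fx (u t) (v t) * u' + fy (u t) (v t) * v') t := by
  have hcont (g : ℝ → ℝ → ℝ) (hg : ContinuousAt (fun p : ℝ × ℝ => g p.1 p.2) (u t, v t)) :
      ContinuousAt (fun p : ℝ × ℝ => ContinuousLinearMap.toSpanSingleton ℝ (g p.1 p.2)) (u t, v t) :=
    (ContinuousLinearMap.toSpanSingletonCLE (𝕜 := ℝ) (E := ℝ)).continuous.continuousAt.comp hg
  have hf := hasStrictFDerivAt_uncurry_coprod
    (f₁ := fun x y => ContinuousLinearMap.toSpanSingleton ℝ (fx x y))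
    (f₂ := fun x y => ContinuousLinearMap.toSpanSingleton ℝ (fy x y))
    (hfx.mono fun p hp => hp.hasFDerivAt) (hfy.mono fun p hp => hp.hasFDerivAt)
    (hcont fx hfxc) (hcont fy hfyc)
  refine (hf.hasFDerivAt.comp_hasDerivAt t (hu.prodMk hv)).congr_deriv ?_
  simp [Function.HasUncurry.uncurry, mul_comm]

section

variable {a κ M y c : ℝ}

theorem hasDerivAt_two_mul_sqrt_sub_mul {Φ : ℝ → ℝ} {Φ' : ℝ} (haκ : a < κ)
    (hΦ : HasDerivAt Φ Φ' κ) :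
    HasDerivAt (fun k => 2 * √(k - a) * Φ k) (Φ κ / √(κ - a) + 2 * √(κ - a) * Φ') κ := by
  have hsqrt : HasDerivAt (fun k => √(k - a)) (1 / (2 * √(κ - a))) κ := by
    simpa using ((hasDerivAt_id' κ).sub_const a).sqrt (sub_pos.2 haκ).ne'
  refine ((hsqrt.const_mul 2).mul hΦ).congr_deriv ?_
  field_simp

theorem abs_two_mul_sqrt_mul_sub_le (haκ : a < κ) (hy : |y - c| ≤ M * (κ - a)) :
    |2 * √(κ - a) * y - 2 * c * √(κ - a)| ≤ 2 * M * (κ - a) ^ ((3 : ℝ) / 2) := by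
  have h32 : (κ - a) ^ ((3 : ℝ) / 2) = √(κ - a) * (κ - a) := by
    rw [show (3 : ℝ) / 2 = 1 / 2 + 1 by norm_num, Real.rpow_add (sub_pos.2 haκ),
      Real.rpow_one, Real.sqrt_eq_rpow]
  rw [h32, show 2 * √(κ - a) * y - 2 * c * √(κ - a) = 2 * √(κ - a) * (y - c) by ring, abs_mul,
    abs_of_nonneg (by positivity)]
  calc 2 * √(κ - a) * |y - c| ≤ 2 * √(κ - a) * (M * (κ - a)) := by gcongr
    _ = _ := by ring

theorem abs_div_sqrt_add_two_mul_sqrt_mul_sub_le {y' : ℝ} (haκ : a < κ)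
    (hy : |y - c| ≤ M * (κ - a)) (hy' : |y'| ≤ 2 * M) :
    |y / √(κ - a) + 2 * √(κ - a) * y' - c / √(κ - a)| ≤ 5 * M * √(κ - a) := by
  have hs : 0 < √(κ - a) := Real.sqrt_pos.2 (sub_pos.2 haκ)
  have hdiv : |y - c| / √(κ - a) ≤ M * √(κ - a) := by
    rwa [div_le_iff₀ hs, mul_assoc, Real.mul_self_sqrt (sub_pos.2 haκ).le]
  calc _ = |(y - c) / √(κ - a) + 2 * √(κ - a) * y'| := by ring_nf
    _ ≤ |y - c| / √(κ - a) + 2 * √(κ - a) * |y'| := by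
        refine (abs_add_le _ _).trans_eq ?_
        rw [abs_div, abs_mul, abs_mul, abs_two, abs_of_pos hs]
    _ ≤ M * √(κ - a) + 2 * √(κ - a) * (2 * M) := by gcongr
    _ = 5 * M * √(κ - a) := by ring

end

section

variable {a b κ M : ℝ} {f fx fk : ℝ → ℝ → ℝ}

theorem sub_mul_sq_mem_Ioo {τ : ℝ} (haκ : a < κ) (hτ : τ ∈ Ioo 0 1) :
    κ - (κ - a) * τ ^ 2 ∈ Ioo a κ := by
  have hτ2 : 0 < τ ^ 2 ∧ τ ^ 2 < 1 := ⟨pow_pos hτ.1 2, by nlinarith [hτ.1, hτ.2]⟩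
  constructor <;> nlinarith [mul_pos (sub_pos.2 haκ) hτ2.1]

theorem image_sub_mul_sq_Ioo (haκ : a < κ) :
    (fun τ : ℝ => κ - (κ - a) * τ ^ 2) '' Ioo 0 1 = Ioo a κ := by
  have hd : 0 < κ - a := sub_pos.2 haκ
  ext x
  refine ⟨?_, fun hx => ⟨√((κ - x) / (κ - a)), ?_, ?_⟩⟩
  · rintro ⟨τ, hτ, rfl⟩
    exact sub_mul_sq_mem_Ioo haκ hτ
  · have : (κ - x) / (κ - a) < 1 := (div_lt_one hd).2 (by linarith [hx.1])
    exact ⟨Real.sqrt_pos.2 (div_pos (by linarith [hx.2]) hd), (Real.sqrt_lt' one_pos).2 (by simpa)⟩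
  · simp only
    rw [Real.sq_sqrt (div_nonneg (by linarith [hx.2]) hd.le)]
    field_simp
    ring

theorem setIntegral_Ioo_div_sqrt_sub (h : ℝ → ℝ) (haκ : a < κ) :
    ∫ x in Ioo a κ, h x / √(κ - x) = 2 * √(κ - a) * ∫ τ in Ioo 0 1, h (κ - (κ - a) * τ ^ 2) := by
  have hd : 0 < κ - a := sub_pos.2 haκ
  have hinj : InjOn (fun τ : ℝ => κ - (κ - a) * τ ^ 2) (Ioo 0 1) := fun τ₁ h₁ τ₂ h₂ h => by
    have : τ₁ ^ 2 = τ₂ ^ 2 := by simpa [hd.ne'] using h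
    exact (pow_left_inj₀ h₁.1.le h₂.1.le two_ne_zero).1 this
  have hderiv (τ : ℝ) : HasDerivAt (fun τ : ℝ => κ - (κ - a) * τ ^ 2) (-(2 * (κ - a) * τ)) τ := by
    refine (((hasDerivAt_pow 2 τ).const_mul (κ - a)).const_sub κ).congr_deriv ?_
    push_cast
    ring
  rw [← image_sub_mul_sq_Ioo haκ, integral_image_eq_integral_abs_deriv_smul measurableSet_Ioo
    (fun τ _ => (hderiv τ).hasDerivWithinAt) hinj, ← integral_const_mul]
  refine setIntegral_congr_fun measurableSet_Ioo fun τ hτ => ?_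
  have hsqrt : √(κ - (κ - (κ - a) * τ ^ 2)) = √(κ - a) * τ := by
    rw [sub_sub_cancel, Real.sqrt_mul hd.le, Real.sqrt_sq hτ.1.le]
  rw [smul_eq_mul, hsqrt, abs_neg, abs_of_pos (mul_pos (mul_pos two_pos hd) hτ.1)]
  have hτ0 : τ ≠ 0 := hτ.1.ne'
  field_simp
  rw [Real.sq_sqrt hd.le]
  ring

theorem continuousOn_sub_mul_sq {g : ℝ → ℝ → ℝ}
    (hg : ContinuousOn (fun p : ℝ × ℝ => g p.1 p.2) (Ico a b ×ˢ Ioo a b)) (hκ : κ ∈ Ioo a b) :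
    ContinuousOn (fun τ => g (κ - (κ - a) * τ ^ 2) κ) (Icc 0 1) := by
  refine hg.comp (f := fun τ => (κ - (κ - a) * τ ^ 2, κ)) (by fun_prop) fun τ hτ => ⟨⟨?_, ?_⟩, hκ⟩
  · have : τ ^ 2 ≤ 1 := by nlinarith [hτ.1, hτ.2]
    nlinarith [hκ.1]
  · nlinarith [hκ.1, hκ.2, sq_nonneg τ]

theorem integrableOn_sub_mul_sq {g : ℝ → ℝ → ℝ}
    (hg : ContinuousOn (fun p : ℝ × ℝ => g p.1 p.2) (Ico a b ×ˢ Ioo a b)) (hκ : κ ∈ Ioo a b) :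
    IntegrableOn (fun τ => g (κ - (κ - a) * τ ^ 2) κ) (Ioo 0 1) :=
  ((continuousOn_sub_mul_sq hg hκ).integrableOn_Icc).mono_set Ioo_subset_Icc_self

theorem abs_setIntegral_sub_mul_sq_sub_le
    (hfx : ∀ x ∈ Ico a b, ∀ κ ∈ Ioo a b,
      HasDerivWithinAt (fun x' => f x' κ) (fx x κ) (Ico a b) x)
    (hfxM : ∀ x ∈ Ico a b, ∀ κ ∈ Ioo a b, |fx x κ| ≤ M)
    (hfc : ContinuousOn (fun p : ℝ × ℝ => f p.1 p.2) (Ico a b ×ˢ Ioo a b)) (hκ : κ ∈ Ioo a b) :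
    |(∫ τ in Ioo 0 1, f (κ - (κ - a) * τ ^ 2) κ) - f a κ| ≤ M * (κ - a) := by
  have ha : a ∈ Ico a b := left_mem_Ico.2 (hκ.1.trans hκ.2)
  have hM : 0 ≤ M := (abs_nonneg _).trans (hfxM a ha κ hκ)
  have hlip (x : ℝ) (hx : x ∈ Ico a b) : ‖f x κ - f a κ‖ ≤ M * ‖x - a‖ :=
    Convex.norm_image_sub_le_of_norm_hasDerivWithin_le (fun y hy => hfx y hy κ hκ)
      (fun y hy => hfxM y hy κ hκ) (convex_Ico a b) ha hx
  have hsub : (∫ τ in Ioo 0 1, f (κ - (κ - a) * τ ^ 2) κ) - f a κ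
      = ∫ τ in Ioo 0 1, (f (κ - (κ - a) * τ ^ 2) κ - f a κ) := by
    rw [integral_sub (integrableOn_sub_mul_sq hfc hκ) (integrableOn_const (by simp)),
      setIntegral_const]
    simp
  rw [hsub, ← Real.norm_eq_abs]
  calc _ ≤ M * (κ - a) * volume.real (Ioo (0 : ℝ) 1) :=
        norm_setIntegral_le_of_norm_le_const (by simp) fun τ hτ => by
          have hx := sub_mul_sq_mem_Ioo hκ.1 hτ
          refine (hlip _ ⟨hx.1.le, hx.2.trans hκ.2⟩).trans ?_
          rw [Real.norm_eq_abs, abs_of_pos (sub_pos.2 hx.1)]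
          gcongr
          linarith [hx.2]
    _ = M * (κ - a) := by simp

theorem hasDerivAt_sub_mul_sq {τ : ℝ}
    (hfx : ∀ x ∈ Ico a b, ∀ κ ∈ Ioo a b,
      HasDerivWithinAt (fun x' => f x' κ) (fx x κ) (Ico a b) x)
    (hfk : ∀ x ∈ Ico a b, ∀ κ ∈ Ioo a b, HasDerivAt (fun κ' => f x κ') (fk x κ) κ)
    (hfxc : ContinuousOn (fun p : ℝ × ℝ => fx p.1 p.2) (Ico a b ×ˢ Ioo a b))
    (hfkc : ContinuousOn (fun p : ℝ × ℝ => fk p.1 p.2) (Ico a b ×ˢ Ioo a b))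
    (hκ : κ ∈ Ioo a b) (hτ : τ ∈ Ioo 0 1) :
    HasDerivAt (fun k => f (k - (k - a) * τ ^ 2) k)
      (fx (κ - (κ - a) * τ ^ 2) κ * (1 - τ ^ 2) + fk (κ - (κ - a) * τ ^ 2) κ) κ := by
  have hx := sub_mul_sq_mem_Ioo hκ.1 hτ
  have hU : Ioo a b ×ˢ Ioo a b ∈ 𝓝 (κ - (κ - a) * τ ^ 2, κ) :=
    (isOpen_Ioo.prod isOpen_Ioo).mem_nhds ⟨⟨hx.1, hx.2.trans hκ.2⟩, hκ⟩
  have hUsub : Ioo a b ×ˢ Ioo a b ⊆ Ico a b ×ˢ Ioo a b := prod_mono Ioo_subset_Ico_self le_rfl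
  have hpath : HasDerivAt (fun k => k - (k - a) * τ ^ 2) (1 - τ ^ 2) κ := by
    have := (hasDerivAt_id' κ).sub (((hasDerivAt_id' κ).sub_const a).mul_const (τ ^ 2))
    rwa [one_mul] at this
  simpa using hasDerivAt_comp_of_continuous_partials (v := id)
    (mem_of_superset hU fun p hp =>
      (hfx p.1 (Ioo_subset_Ico_self hp.1) p.2 hp.2).hasDerivAt (Ico_mem_nhds hp.1.1 hp.1.2))
    (mem_of_superset hU fun p hp => hfk p.1 (Ioo_subset_Ico_self hp.1) p.2 hp.2)
    (hfxc.continuousAt (mem_of_superset hU hUsub)) (hfkc.continuousAt (mem_of_superset hU hUsub))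
    hpath (hasDerivAt_id κ)

theorem exists_hasDerivAt_setIntegral_sub_mul_sq
    (hfx : ∀ x ∈ Ico a b, ∀ κ ∈ Ioo a b,
      HasDerivWithinAt (fun x' => f x' κ) (fx x κ) (Ico a b) x)
    (hfk : ∀ x ∈ Ico a b, ∀ κ ∈ Ioo a b, HasDerivAt (fun κ' => f x κ') (fk x κ) κ)
    (hfc : ContinuousOn (fun p : ℝ × ℝ => f p.1 p.2) (Ico a b ×ˢ Ioo a b))
    (hfxc : ContinuousOn (fun p : ℝ × ℝ => fx p.1 p.2) (Ico a b ×ˢ Ioo a b))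
    (hfkc : ContinuousOn (fun p : ℝ × ℝ => fk p.1 p.2) (Ico a b ×ˢ Ioo a b))
    (hfxM : ∀ x ∈ Ico a b, ∀ κ ∈ Ioo a b, |fx x κ| ≤ M)
    (hfkM : ∀ x ∈ Ico a b, ∀ κ ∈ Ioo a b, |fk x κ| ≤ M) (hκ : κ ∈ Ioo a b) :
    ∃ Φ' : ℝ, HasDerivAt (fun k => ∫ τ in Ioo 0 1, f (k - (k - a) * τ ^ 2) k) Φ' κ ∧
      |Φ'| ≤ 2 * M := by
  set D : ℝ → ℝ → ℝ := fun k τ =>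
    fx (k - (k - a) * τ ^ 2) k * (1 - τ ^ 2) + fk (k - (k - a) * τ ^ 2) k
  have hDM : ∀ k ∈ Ioo a b, ∀ τ ∈ Ioo (0 : ℝ) 1, ‖D k τ‖ ≤ 2 * M := fun k hk τ hτ => by
    have hx := sub_mul_sq_mem_Ioo hk.1 hτ
    have hxI : k - (k - a) * τ ^ 2 ∈ Ico a b := ⟨hx.1.le, hx.2.trans hk.2⟩
    have hτ2 : |1 - τ ^ 2| ≤ 1 := abs_le.2 ⟨by nlinarith [hτ.1, hτ.2], by nlinarith⟩
    calc ‖D k τ‖ ≤ |fx (k - (k - a) * τ ^ 2) k| * |1 - τ ^ 2| + |fk (k - (k - a) * τ ^ 2) k| := by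
          rw [Real.norm_eq_abs, ← abs_mul]
          exact abs_add_le _ _
      _ ≤ M * 1 + M := by
          gcongr
          · exact (abs_nonneg _).trans (hfxM _ hxI k hk)
          · exact hfxM _ hxI k hk
          · exact hfkM _ hxI k hk
      _ = 2 * M := by ring
  have hD : HasDerivAt (fun k => ∫ τ in Ioo 0 1, f (k - (k - a) * τ ^ 2) k)
      (∫ τ in Ioo 0 1, D κ τ) κ :=
    (hasDerivAt_integral_of_dominated_loc_of_deriv_le (isOpen_Ioo.mem_nhds hκ)
      (eventually_of_mem (isOpen_Ioo.mem_nhds hκ) fun k hk =>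
        ((continuousOn_sub_mul_sq hfc hk).mono Ioo_subset_Icc_self).aestronglyMeasurable
          measurableSet_Ioo)
      (integrableOn_sub_mul_sq hfc hκ)
      ((((continuousOn_sub_mul_sq hfxc hκ).mul (by fun_prop)).add
        (continuousOn_sub_mul_sq hfkc hκ)).mono Ioo_subset_Icc_self |>.aestronglyMeasurable
          measurableSet_Ioo)
      ((ae_restrict_iff' measurableSet_Ioo).2 (.of_forall fun τ hτ k hk => hDM k hk τ hτ))
      (integrable_const (2 * M))
      ((ae_restrict_iff' measurableSet_Ioo).2 (.of_forall fun τ hτ k hk =>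
        hasDerivAt_sub_mul_sq hfx hfk hfxc hfkc hk hτ))).2
  refine ⟨_, hD, ?_⟩
  rw [← Real.norm_eq_abs]
  calc _ ≤ 2 * M * volume.real (Ioo (0 : ℝ) 1) :=
        norm_setIntegral_le_of_norm_le_const (by simp) fun τ hτ => hDM κ hκ τ hτ
    _ = 2 * M := by simp

end

theorem stmt_11_general (a b : ℝ) (hab : a < b) (f fx fk fxk : ℝ → ℝ → ℝ)
    (hfx : ∀ x ∈ Ico a b, ∀ κ ∈ Ioo a b,
      HasDerivWithinAt (fun x' => f x' κ) (fx x κ) (Ico a b) x)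
    (hfk : ∀ x ∈ Ico a b, ∀ κ ∈ Ioo a b,
      HasDerivAt (fun κ' => f x κ') (fk x κ) κ)
    (hfc : ContinuousOn (fun p : ℝ × ℝ => f p.1 p.2) (Ico a b ×ˢ Ioo a b))
    (hfxc : ContinuousOn (fun p : ℝ × ℝ => fx p.1 p.2) (Ico a b ×ˢ Ioo a b))
    (hfkc : ContinuousOn (fun p : ℝ × ℝ => fk p.1 p.2) (Ico a b ×ˢ Ioo a b))
    (hbdd : ∃ M : ℝ, ∀ x ∈ Ico a b, ∀ κ ∈ Ioo a b,
      |f x κ| ≤ M ∧ |fx x κ| ≤ M ∧ |fk x κ| ≤ M ∧ |fxk x κ| ≤ M)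
    (F : ℝ → ℝ) (hF : ∀ κ : ℝ, F κ = ∫ x in Ioo a κ, f x κ / Real.sqrt (κ - x)) :
    ∃ C > 0, ∀ κ ∈ Ioo a b,
      |F κ - 2 * f a κ * Real.sqrt (κ - a)| ≤ C * (κ - a) ^ ((3 : ℝ) / 2) ∧
      ∃ F' : ℝ, HasDerivAt F F' κ ∧
        |F' - f a κ / Real.sqrt (κ - a)| ≤ C * Real.sqrt (κ - a) := by
  obtain ⟨M, hM⟩ := hbdd
  have hM0 : 0 ≤ M := (abs_nonneg _).trans
    (hM a (left_mem_Ico.2 hab) ((a + b) / 2) ⟨by linarith, by linarith⟩).1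
  have hfxM (x) (hx : x ∈ Ico a b) (κ) (hκ : κ ∈ Ioo a b) : |fx x κ| ≤ M := (hM x hx κ hκ).2.1
  have hfkM (x) (hx : x ∈ Ico a b) (κ) (hκ : κ ∈ Ioo a b) : |fk x κ| ≤ M := (hM x hx κ hκ).2.2.1
  set Φ : ℝ → ℝ := fun κ => ∫ τ in Ioo 0 1, f (κ - (κ - a) * τ ^ 2) κ
  have hFΦ (κ : ℝ) (hκ : κ ∈ Ioo a b) : F κ = 2 * √(κ - a) * Φ κ :=
    (hF κ).trans (setIntegral_Ioo_div_sqrt_sub _ hκ.1)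
  refine ⟨5 * M + 1, by positivity, fun κ hκ => ?_⟩
  have hΦ := abs_setIntegral_sub_mul_sq_sub_le hfx hfxM hfc hκ
  obtain ⟨Φ', hΦ', hΦ'M⟩ :=
    exists_hasDerivAt_setIntegral_sub_mul_sq hfx hfk hfc hfxc hfkc hfxM hfkM hκ
  refine ⟨?_, _, (hasDerivAt_two_mul_sqrt_sub_mul hκ.1 hΦ').congr_of_eventuallyEq
    (eventually_of_mem (isOpen_Ioo.mem_nhds hκ) hFΦ), ?_⟩
  · rw [hFΦ κ hκ]
    exact (abs_two_mul_sqrt_mul_sub_le hκ.1 hΦ).trans (mul_le_mul_of_nonneg_right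
      (by linarith) (Real.rpow_nonneg (sub_pos.2 hκ.1).le _))
  · exact (abs_div_sqrt_add_two_mul_sqrt_mul_sub_le hκ.1 hΦ hΦ'M).trans
      (mul_le_mul_of_nonneg_right (by linarith) (Real.sqrt_nonneg _))

/-- asymptotics of `F(κ) = ∫_a^κ f(x,κ)/√(κ−x) dx` and of its
derivative, for `f` with continuous bounded partial derivatives on `[a,b)×(a,b)`. -/
theorem stmt_11 (a b : ℝ) (hab : a < b) (f fx fk fxk : ℝ → ℝ → ℝ)
    (hfx : ∀ x ∈ Ico a b, ∀ κ ∈ Ioo a b,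
      HasDerivWithinAt (fun x' => f x' κ) (fx x κ) (Ico a b) x)
    (hfk : ∀ x ∈ Ico a b, ∀ κ ∈ Ioo a b,
      HasDerivAt (fun κ' => f x κ') (fk x κ) κ)
    (hfxk : ∀ x ∈ Ico a b, ∀ κ ∈ Ioo a b,
      HasDerivAt (fun κ' => fx x κ') (fxk x κ) κ)
    (hfc : ContinuousOn (fun p : ℝ × ℝ => f p.1 p.2) (Ico a b ×ˢ Ioo a b))
    (hfxc : ContinuousOn (fun p : ℝ × ℝ => fx p.1 p.2) (Ico a b ×ˢ Ioo a b))
    (hfkc : ContinuousOn (fun p : ℝ × ℝ => fk p.1 p.2) (Ico a b ×ˢ Ioo a b))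
    (hfxkc : ContinuousOn (fun p : ℝ × ℝ => fxk p.1 p.2) (Ico a b ×ˢ Ioo a b))
    (hbdd : ∃ M : ℝ, ∀ x ∈ Ico a b, ∀ κ ∈ Ioo a b,
      |f x κ| ≤ M ∧ |fx x κ| ≤ M ∧ |fk x κ| ≤ M ∧ |fxk x κ| ≤ M)
    (F : ℝ → ℝ) (hF : ∀ κ : ℝ, F κ = ∫ x in Ioo a κ, f x κ / Real.sqrt (κ - x)) :
    ∃ C > 0, ∀ κ ∈ Ioo a b,
      |F κ - 2 * f a κ * Real.sqrt (κ - a)| ≤ C * (κ - a) ^ ((3 : ℝ) / 2) ∧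
      ∃ F' : ℝ, HasDerivAt F F' κ ∧
        |F' - f a κ / Real.sqrt (κ - a)| ≤ C * Real.sqrt (κ - a) :=
  stmt_11_general a b hab f fx fk fxk hfx hfk hfc hfxc hfkc hbdd F hF
end

section
/- Let 0 < ν₁ < ν₀ be real numbers and let h be a Lebesgue-integrable real-valued function on the rectangle (ν₁,ν₀) × (0,ν₁). If ∫_{ν₁}^{ν₀} ∫_0^{ν₁} h(x₁,x₂) · ((x₁+x₂)/2)^{m−2r} · (x₁x₂)^{r} dx₂ dx₁ = 0 for all integers m, r with 0 ≤ 2r ≤ m, then h = 0 almost everywhere. -/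
open MeasureTheory Set

/-!
The functions on the rectangle whose integrals against `h` vanish form a linear space; by
hypothesis it contains every monomial in `(x₁ + x₂)/2` and `x₁x₂`, hence the algebra these
generate. On the closed rectangle `x₂ ≤ ν₁ ≤ x₁`, so `(x₁ + x₂)/2` and `x₁x₂` determine
`(x₁, x₂)` and this algebra separates points; by Stone–Weierstrass it is uniformly dense,
and since `h` is integrable, `h` then integrates to zero against every continuous function,
which forces `h = 0` almost everywhere.
-/

section

variable {X : Type*} [TopologicalSpace X]

theorem ContinuousMap.exists_mem_subalgebra_near_of_separatesPoints_on
    {A : Subalgebra ℝ C(X, ℝ)} {K : Set X} (hK : IsCompact K)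
    (hsep : ∀ x ∈ K, ∀ y ∈ K, x ≠ y → ∃ a ∈ A, a x ≠ a y) (f : C(X, ℝ)) {ε : ℝ} (hε : 0 < ε) :
    ∃ a ∈ A, ∀ x ∈ K, |a x - f x| < ε := by
  have : CompactSpace K := isCompact_iff_compactSpace.mp hK
  let restrictK : C(X, ℝ) →ₐ[ℝ] C(K, ℝ) :=
    ContinuousMap.compRightAlgHom ℝ ℝ ⟨Subtype.val, continuous_subtype_val⟩
  have hsepK : (A.map restrictK).SeparatesPoints := by
    rintro x y hxy
    obtain ⟨a, ha, hne⟩ := hsep x x.2 y y.2 (Subtype.coe_ne_coe.mpr hxy)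
    exact ⟨restrictK a, ⟨restrictK a, Subalgebra.mem_map.mpr ⟨a, ha, rfl⟩, rfl⟩, hne⟩
  obtain ⟨⟨_, haK⟩, hnear⟩ := exists_mem_subalgebra_near_continuous_of_separatesPoints _ hsepK
    (fun x : K => f x) (by fun_prop) ε hε
  obtain ⟨a, ha, rfl⟩ := Subalgebra.mem_map.mp haK
  exact ⟨a, ha, fun x hx => hnear ⟨x, hx⟩⟩

variable [MeasurableSpace X] {μ : Measure X} {h : X → ℝ}

theorem integral_mul_eq_zero_of_mem_adjoin_pair {S P : C(X, ℝ)}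
    (hint : ∀ g : C(X, ℝ), Integrable (fun x => h x * g x) μ)
    (hmono : ∀ m n : ℕ, ∫ x, h x * (S ^ m * P ^ n) x ∂μ = 0)
    {a : C(X, ℝ)} (ha : a ∈ Algebra.adjoin ℝ {S, P}) : ∫ x, h x * a x ∂μ = 0 := by
  let pairing : C(X, ℝ) →ₗ[ℝ] ℝ :=
    { toFun := fun g => ∫ x, h x * g x ∂μ
      map_add' := fun f g => by
        simp only [ContinuousMap.add_apply, mul_add]
        exact integral_add (hint f) (hint g)
      map_smul' := fun c g => by
        simp only [ContinuousMap.smul_apply, smul_eq_mul, mul_left_comm _ c]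
        exact integral_const_mul c _ }
  have hspan :
      Submodule.span ℝ (Submonoid.closure {S, P} : Set C(X, ℝ)) ≤ LinearMap.ker pairing :=
    Submodule.span_le.mpr fun g hg => by
      obtain ⟨m, n, rfl⟩ := (Submonoid.mem_closure_pair S P g).mp hg
      exact hmono m n
  rw [← Subalgebra.mem_toSubmodule, Algebra.adjoin_eq_span] at ha
  exact hspan ha

variable [OpensMeasurableSpace X] {K : Set X}

theorem integrable_mul_continuousMap_of_ae_mem_isCompact (hK : IsCompact K)
    (hμK : ∀ᵐ x ∂μ, x ∈ K) (hh : Integrable h μ) (g : C(X, ℝ)) :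
    Integrable (fun x => h x * g x) μ := by
  obtain ⟨C, hC⟩ := hK.exists_bound_of_continuousOn g.continuous.continuousOn
  exact hh.mul_bdd g.continuous.aestronglyMeasurable (hμK.mono fun x hx => hC x hx)

theorem integral_mul_continuousMap_eq_zero_of_subalgebra {A : Subalgebra ℝ C(X, ℝ)}
    (hK : IsCompact K) (hsep : ∀ x ∈ K, ∀ y ∈ K, x ≠ y → ∃ a ∈ A, a x ≠ a y)
    (hμK : ∀ᵐ x ∂μ, x ∈ K) (hh : Integrable h μ) (hA : ∀ a ∈ A, ∫ x, h x * a x ∂μ = 0)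
    (f : C(X, ℝ)) : ∫ x, h x * f x ∂μ = 0 := by
  have hint := integrable_mul_continuousMap_of_ae_mem_isCompact hK hμK hh
  set C := ∫ x, |h x| ∂μ
  have hC : 0 ≤ C := integral_nonneg fun _ => abs_nonneg _
  refine abs_nonpos_iff.mp (le_of_forall_pos_le_add fun ε hε => ?_)
  have hδ : 0 < ε / (C + 1) := by positivity
  obtain ⟨a, ha, hnear⟩ :=
    ContinuousMap.exists_mem_subalgebra_near_of_separatesPoints_on hK hsep f hδ
  have hdiff : ∫ x, h x * f x ∂μ = ∫ x, h x * (f - a) x ∂μ := by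
    simp only [ContinuousMap.sub_apply, mul_sub]
    rw [integral_sub (hint f) (hint a), hA a ha, sub_zero]
  calc |∫ x, h x * f x ∂μ| ≤ ∫ x, |h x| * (ε / (C + 1)) ∂μ := by
        rw [hdiff]
        refine (abs_integral_le_integral_abs).trans (integral_mono_ae (hint _).abs
          (hh.abs.mul_const _) (hμK.mono fun x hx => ?_))
        simp only [abs_mul, ContinuousMap.sub_apply, abs_sub_comm (f x)]
        exact mul_le_mul_of_nonneg_left (hnear x hx).le (abs_nonneg _)
    _ = C * (ε / (C + 1)) := integral_mul_const _ _
    _ ≤ 0 + ε := by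
        rw [zero_add, mul_div_assoc', div_le_iff₀ (by positivity)]
        nlinarith

end

noncomputable def halfSum : C(ℝ × ℝ, ℝ) := ⟨fun p => (p.1 + p.2) / 2, by fun_prop⟩

def coordMul : C(ℝ × ℝ, ℝ) := ⟨fun p => p.1 * p.2, by fun_prop⟩

theorem Prod.ext_of_add_eq_of_mul_eq {x y : ℝ × ℝ} (hx : x.2 ≤ x.1) (hy : y.2 ≤ y.1)
    (hadd : x.1 + x.2 = y.1 + y.2) (hmul : x.1 * x.2 = y.1 * y.2) : x = y := by
  have hsq : (x.1 - x.2) ^ 2 = (y.1 - y.2) ^ 2 := by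
    linear_combination (x.1 + x.2 + y.1 + y.2) * hadd - 4 * hmul
  have hdiff : x.1 - x.2 = y.1 - y.2 :=
    (pow_left_inj₀ (sub_nonneg.mpr hx) (sub_nonneg.mpr hy) two_ne_zero).mp hsq
  exact Prod.ext (by linarith) (by linarith)

theorem adjoin_halfSum_coordMul_separatesPoints {x y : ℝ × ℝ} (hx : x.2 ≤ x.1) (hy : y.2 ≤ y.1)
    (hxy : x ≠ y) : ∃ a ∈ Algebra.adjoin ℝ {halfSum, coordMul}, a x ≠ a y := by
  by_cases hadd : halfSum x = halfSum y
  · refine ⟨coordMul, Algebra.subset_adjoin (by simp), fun hmul => hxy ?_⟩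
    refine Prod.ext_of_add_eq_of_mul_eq hx hy ?_ hmul
    simp only [halfSum, ContinuousMap.coe_mk] at hadd
    linarith
  · exact ⟨halfSum, Algebra.subset_adjoin (by simp), hadd⟩

theorem setIntegral_prod_mul_halfSum_pow_mul_coordMul_pow {s t : Set ℝ} {h : ℝ × ℝ → ℝ}
    (m n : ℕ) (hint : IntegrableOn (fun p => h p * (halfSum ^ m * coordMul ^ n) p) (s ×ˢ t)) :
    ∫ p in s ×ˢ t, h p * (halfSum ^ m * coordMul ^ n) p =
      ∫ x₁ in s, ∫ x₂ in t, h (x₁, x₂) * ((x₁ + x₂) / 2) ^ m * (x₁ * x₂) ^ n := by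
  rw [Measure.volume_eq_prod] at hint ⊢
  simpa only [ContinuousMap.mul_apply, ContinuousMap.pow_apply, halfSum, coordMul,
    ContinuousMap.coe_mk, mul_assoc] using setIntegral_prod _ hint

theorem stmt_16_general (ν₁ ν₀ : ℝ)
    (h : ℝ × ℝ → ℝ) (hint : IntegrableOn h (Ioo ν₁ ν₀ ×ˢ Ioo 0 ν₁))
    (hvan : ∀ m r : ℕ, 2 * r ≤ m →
      ∫ x₁ in Ioo ν₁ ν₀, ∫ x₂ in Ioo (0 : ℝ) ν₁,
        h (x₁, x₂) * ((x₁ + x₂) / 2) ^ (m - 2 * r) * (x₁ * x₂) ^ r = 0) :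
    ∀ᵐ p ∂(volume.restrict (Ioo ν₁ ν₀ ×ˢ Ioo 0 ν₁)), h p = 0 := by
  set K := Icc ν₁ ν₀ ×ˢ Icc 0 ν₁
  have hK : IsCompact K := isCompact_Icc.prod isCompact_Icc
  have hμK : ∀ᵐ p ∂(volume.restrict (Ioo ν₁ ν₀ ×ˢ Ioo 0 ν₁)), p ∈ K :=
    ae_restrict_of_forall_mem (measurableSet_Ioo.prod measurableSet_Ioo)
      (prod_mono Ioo_subset_Icc_self Ioo_subset_Icc_self)
  have hsep : ∀ x ∈ K, ∀ y ∈ K, x ≠ y →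
      ∃ a ∈ Algebra.adjoin ℝ {halfSum, coordMul}, a x ≠ a y :=
    fun x hx y hy => adjoin_halfSum_coordMul_separatesPoints (hx.2.2.trans hx.1.1)
      (hy.2.2.trans hy.1.1)
  have hintK := integrable_mul_continuousMap_of_ae_mem_isCompact hK hμK hint
  have hmono (m n : ℕ) :
      ∫ p in Ioo ν₁ ν₀ ×ˢ Ioo 0 ν₁, h p * (halfSum ^ m * coordMul ^ n) p = 0 := by
    rw [setIntegral_prod_mul_halfSum_pow_mul_coordMul_pow m n (hintK _)]
    simpa using hvan (m + 2 * n) n (by omega)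
  refine ae_eq_zero_of_integral_contDiff_smul_eq_zero hint.locallyIntegrable fun g hg _ => ?_
  simp_rw [smul_eq_mul, mul_comm (g _)]
  exact integral_mul_continuousMap_eq_zero_of_subalgebra hK hsep hμK hint
    (fun _ ha => integral_mul_eq_zero_of_mem_adjoin_pair hintK hmono ha) ⟨g, hg.continuous⟩

/-- an integrable function on `(ν₁,ν₀) × (0,ν₁)` whose integrals
against all monomials `((x₁+x₂)/2)^{m−2r} (x₁x₂)^r`, `0 ≤ 2r ≤ m`, vanish is
zero almost everywhere. -/
theorem stmt_16 (ν₁ ν₀ : ℝ) (h0 : 0 < ν₁) (h1 : ν₁ < ν₀)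
    (h : ℝ × ℝ → ℝ) (hint : IntegrableOn h (Ioo ν₁ ν₀ ×ˢ Ioo 0 ν₁))
    (hvan : ∀ m r : ℕ, 2 * r ≤ m →
      ∫ x₁ in Ioo ν₁ ν₀, ∫ x₂ in Ioo (0 : ℝ) ν₁,
        h (x₁, x₂) * ((x₁ + x₂) / 2) ^ (m - 2 * r) * (x₁ * x₂) ^ r = 0) :
    ∀ᵐ p ∂(volume.restrict (Ioo ν₁ ν₀ ×ˢ Ioo 0 ν₁)), h p = 0 :=
  stmt_16_general ν₁ ν₀ h hint hvan
end
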